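/- arXiv:1908.00881 — 8 statements merged into one kernel-verified Lean document; each statement's English description precedes it below -/
import Mathlib

section
/- Let D be an n × n real symmetric matrix with zero diagonal, let e be the all-ones vector in ℝⁿ, and let s ∈ ℝⁿ satisfy eᵀs = 1. Then D is a Euclidean distance matrix (i.e., there exist points p¹,...,pⁿ in some Euclidean space with D_{ij} = ‖pⁱ - pʲ‖²) if and only if the matrix B = -(1/2)(I - e sᵀ) D (I - s eᵀ) is positive semidefinite. -/
/-!
If `D` is the matrix of squared distances of points `pᵢ`, then `D = c eᵀ + e cᵀ - 2 G` with
`cᵢ = ‖pᵢ‖²` and `G` the Gram matrix of the points. Since `eᵀs = 1`, the matrix `J = I - e sᵀ`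
annihilates `e`, so the rank-one terms vanish under `X ↦ J X Jᵀ` and `-(1/2) J D Jᵀ = J G Jᵀ` is
positive semidefinite.

Conversely, for symmetric `D` with zero diagonal the entries of `B = -(1/2) J D Jᵀ` satisfy
`D i j = B i i + B j j - 2 B i j`. If `B` is positive semidefinite it is the Gram matrix of some
vectors `vᵢ`, and then `D i j = ‖vᵢ - vⱼ‖²`.
-/

open Matrix
open scoped ComplexOrder

namespace Matrix

variable {ι : Type*}

lemma dist_sq_eq_gram {E : Type*} [NormedAddCommGroup E] [InnerProductSpace ℝ E]
    (v : ι → E) (i j : ι) :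
    dist (v i) (v j) ^ 2 = gram ℝ v i i + gram ℝ v j j - 2 * gram ℝ v i j := by
  rw [dist_eq_norm, norm_sub_sq_real]
  simp only [gram_apply, real_inner_self_eq_norm_sq]
  ring

lemma of_dist_sq_eq_vecMulVec_add_vecMulVec_sub_gram {E : Type*} [NormedAddCommGroup E]
    [InnerProductSpace ℝ E] (p : ι → E) :
    (of fun i j => dist (p i) (p j) ^ 2) =
      vecMulVec (fun i => ‖p i‖ ^ 2) 1 + vecMulVec 1 (fun i => ‖p i‖ ^ 2) -
        (2 : ℝ) • gram ℝ p := by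
  ext i j
  simp [dist_sq_eq_gram]

variable [Fintype ι]

lemma PosSemidef.exists_eq_gram {𝕜 : Type*} [RCLike 𝕜] {A : Matrix ι ι 𝕜}
    (hA : A.PosSemidef) : ∃ v : ι → EuclideanSpace 𝕜 ι, gram 𝕜 v = A := by
  classical
  open scoped MatrixOrder in
  obtain ⟨C, rfl⟩ := CStarAlgebra.nonneg_iff_eq_star_mul_self.mp hA.nonneg
  refine ⟨fun i => WithLp.toLp 2 (Cᵀ i), ?_⟩
  ext i j
  simp [EuclideanSpace.inner_toLp_toLp, mul_apply, dotProduct, mul_comm]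

lemma mul_vecMulVec_add_vecMulVec_mul_transpose_eq_zero {R : Type*} [CommRing R]
    {J : Matrix ι ι R} {e : ι → R} (hJ : J *ᵥ e = 0) (c : ι → R) :
    J * (vecMulVec c e + vecMulVec e c) * Jᵀ = 0 := by
  rw [Matrix.mul_add, Matrix.add_mul, mul_vecMulVec, mul_vecMulVec, hJ, vecMulVec_mul,
    vecMulVec_mul, vecMul_transpose, hJ]
  ext
  simp [vecMulVec]

variable [DecidableEq ι]

def centering {R : Type*} [CommRing R] (s : ι → R) : Matrix ι ι R := 1 - vecMulVec 1 s

def doubleCentering {R : Type*} [Field R] (s : ι → R) (D : Matrix ι ι R) : Matrix ι ι R :=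
  (-(1 / 2) : R) • (centering s * D * (centering s)ᵀ)

lemma centering_mulVec_one {R : Type*} [CommRing R] {s : ι → R} (hs : ∑ i, s i = 1) :
    centering s *ᵥ 1 = 0 := by
  rw [centering, sub_mulVec, one_mulVec, vecMulVec_mulVec, dotProduct_one, hs]
  simp

lemma centering_mul_mul_transpose_apply {R : Type*} [CommRing R] (s : ι → R)
    (D : Matrix ι ι R) (i j : ι) :
    (centering s * D * (centering s)ᵀ) i j =
      D i j - (s ᵥ* D) j - (D *ᵥ s) i + s ⬝ᵥ D *ᵥ s := by
  rw [centering, transpose_sub, transpose_one, transpose_vecMulVec, Matrix.sub_mul,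
    Matrix.one_mul, vecMulVec_mul, Matrix.mul_sub, Matrix.mul_one, Matrix.sub_mul, mul_vecMulVec,
    vecMulVec_mul_vecMulVec, ← dotProduct_mulVec]
  simp
  ring

lemma posSemidef_doubleCentering_of_dist_sq {E : Type*} [NormedAddCommGroup E]
    [InnerProductSpace ℝ E] {s : ι → ℝ} (hs : ∑ i, s i = 1) (p : ι → E) :
    (doubleCentering s (of fun i j => dist (p i) (p j) ^ 2)).PosSemidef := by
  have hB : doubleCentering s (of fun i j => dist (p i) (p j) ^ 2)
      = centering s * gram ℝ p * (centering s)ᵀ := by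
    rw [doubleCentering, of_dist_sq_eq_vecMulVec_add_vecMulVec_sub_gram, Matrix.mul_sub,
      Matrix.sub_mul,
      mul_vecMulVec_add_vecMulVec_mul_transpose_eq_zero (centering_mulVec_one hs)]
    simp [smul_smul]
  rw [hB]
  exact (posSemidef_gram ℝ p).mul_mul_conjTranspose_same _

lemma IsSymm.apply_eq_doubleCentering {R : Type*} [Field R] [CharZero R] {D : Matrix ι ι R}
    (hsym : D.IsSymm) (hdiag : ∀ i, D i i = 0) (s : ι → R) (i j : ι) :
    D i j = doubleCentering s D i i + doubleCentering s D j j - 2 * doubleCentering s D i j := by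
  have hsD : s ᵥ* D = D *ᵥ s := by rw [← vecMul_transpose, hsym.eq]
  simp only [doubleCentering, Matrix.smul_apply, centering_mul_mul_transpose_apply, hsD, hdiag,
    smul_eq_mul]
  ring

end Matrix

theorem stmt1 {n : ℕ} (D : Matrix (Fin n) (Fin n) ℝ)
    (hsym : D.IsSymm) (hdiag : ∀ i, D i i = 0)
    (e : Fin n → ℝ) (he : e = fun _ => 1)
    (s : Fin n → ℝ) (hs : ∑ i, s i = 1)
    (B : Matrix (Fin n) (Fin n) ℝ)
    (hB : B = (-(1/2) : ℝ) • ((1 - vecMulVec e s) * D * (1 - vecMulVec s e))) :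
    (∃ (m : ℕ) (p : Fin n → EuclideanSpace ℝ (Fin m)),
        ∀ i j, D i j = dist (p i) (p j) ^ 2) ↔ B.PosSemidef := by
  have hJ : 1 - vecMulVec e s = centering s := by rw [he]; rfl
  have hK : 1 - vecMulVec s e = (centering s)ᵀ := by
    rw [← hJ, transpose_sub, transpose_one, transpose_vecMulVec]
  rw [hJ, hK, ← doubleCentering] at hB
  subst hB
  constructor
  · rintro ⟨m, p, hD⟩
    rw [show D = of fun i j => dist (p i) (p j) ^ 2 from ext hD]
    exact posSemidef_doubleCentering_of_dist_sq hs p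
  · intro hB
    obtain ⟨v, hv⟩ := hB.exists_eq_gram
    refine ⟨n, v, fun i j => ?_⟩
    rw [dist_sq_eq_gram, hv]
    exact hsym.apply_eq_doubleCentering hdiag s i j
end

section
/- If D is a nonzero n × n Euclidean distance matrix, then the all-ones vector e lies in the column space of D; i.e., there exists w ∈ ℝⁿ with Dw = e. -/
/-!
Since `D` is symmetric, its column space is the orthogonal complement of its kernel, so it
suffices that every `z` with `D z = 0` has coordinate sum `0`. Otherwise rescale `z` to weights
`y` with `∑ y = 1` and put `v = ∑ y_j p_j`. The parallel-axis identity
`∑_j y_j ‖x - p_j‖² = ‖x - v‖² + ∑_j y_j ‖p_j - v‖²` turns `D y = 0` into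
`‖p_i - v‖² = -c` for all `i`, with `c = ∑_j y_j ‖p_j - v‖²`; averaging with the weights `y`
gives `c = -c`, so every `p_i` equals `v` and `D = 0`.
-/

open Matrix

theorem Matrix.IsHermitian.exists_mulVec_eq_of_forall_dotProduct_eq_zero
    {𝕜 ι : Type*} [RCLike 𝕜] [Fintype ι] [DecidableEq ι] {A : Matrix ι ι 𝕜}
    (hA : A.IsHermitian) {b : ι → 𝕜} (hb : ∀ z, A *ᵥ z = 0 → star b ⬝ᵥ z = 0) :
    ∃ w, A *ᵥ w = b := by
  set T := A.toEuclideanLin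
  have hb' : WithLp.toLp 2 b ∈ (LinearMap.range T)ᗮᗮ := by
    rw [(isSymmetric_toEuclideanLin_iff.mpr hA).orthogonal_range, Submodule.mem_orthogonal']
    intro z hz
    rw [EuclideanSpace.inner_eq_star_dotProduct, dotProduct_comm]
    exact hb _ (by simpa [T] using congrArg WithLp.ofLp (LinearMap.mem_ker.mp hz))
  obtain ⟨w, hw⟩ := (LinearMap.range T).orthogonal_orthogonal ▸ hb'
  exact ⟨WithLp.ofLp w, by simpa [T] using congrArg WithLp.ofLp hw⟩

section ParallelAxis

variable {E ι : Type*} [NormedAddCommGroup E] [InnerProductSpace ℝ E] [Fintype ι]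

open RealInnerProductSpace

theorem sum_smul_sub_sum_smul_eq_zero {y : ι → ℝ} (hy : ∑ j, y j = 1) (p : ι → E) :
    ∑ j, y j • (p j - ∑ k, y k • p k) = 0 := by
  simp_rw [smul_sub, Finset.sum_sub_distrib, ← Finset.sum_smul, hy, one_smul, sub_self]

theorem sum_mul_norm_sub_sq_eq {y : ι → ℝ} (hy : ∑ j, y j = 1) (p : ι → E) (x : E) :
    ∑ j, y j * ‖x - p j‖ ^ 2 =
      ‖x - ∑ k, y k • p k‖ ^ 2 + ∑ j, y j * ‖p j - ∑ k, y k • p k‖ ^ 2 := by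
  have hbalance := sum_smul_sub_sum_smul_eq_zero hy p
  set v := ∑ k, y k • p k
  have hcross : ∑ j, y j * ⟪x - v, p j - v⟫ = 0 := by
    simp_rw [← real_inner_smul_right, ← inner_sum, hbalance, inner_zero_right]
  calc ∑ j, y j * ‖x - p j‖ ^ 2
      = ∑ j, y j * (‖x - v‖ ^ 2 - 2 * ⟪x - v, p j - v⟫ + ‖p j - v‖ ^ 2) :=
        Finset.sum_congr rfl fun j _ => by rw [← norm_sub_sq_real, sub_sub_sub_cancel_right]
    _ = (∑ j, y j) * ‖x - v‖ ^ 2 - 2 * ∑ j, y j * ⟪x - v, p j - v⟫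
          + ∑ j, y j * ‖p j - v‖ ^ 2 := by
        rw [Finset.sum_mul, Finset.mul_sum, ← Finset.sum_sub_distrib, ← Finset.sum_add_distrib]
        exact Finset.sum_congr rfl fun j _ => by ring
    _ = _ := by rw [hy, hcross]; ring

theorem eq_sum_smul_of_forall_sum_mul_dist_sq_eq_zero {y : ι → ℝ} (hy : ∑ j, y j = 1)
    {p : ι → E} (h : ∀ i, ∑ j, y j * dist (p i) (p j) ^ 2 = 0) (i : ι) :
    p i = ∑ k, y k • p k := by
  set v := ∑ k, y k • p k
  set c := ∑ j, y j * ‖p j - v‖ ^ 2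
  have hi : ∀ i, ‖p i - v‖ ^ 2 = -c := fun i => by
    have := sum_mul_norm_sub_sq_eq hy p (p i)
    rw [show ∑ j, y j * ‖p i - p j‖ ^ 2 = 0 by simpa only [dist_eq_norm] using h i] at this
    linarith
  have hc : c = 0 := by
    have : c = -c := calc
      c = ∑ j, y j * -c := Finset.sum_congr rfl fun j _ => by rw [hi]
      _ = -c := by rw [← Finset.sum_mul, hy, one_mul]
    linarith
  rw [← sub_eq_zero, ← norm_eq_zero, ← pow_eq_zero_iff two_ne_zero, hi, hc, neg_zero]

end ParallelAxis

theorem Matrix.sum_eq_zero_of_mulVec_eq_zero_of_eq_dist_sq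
    {E ι : Type*} [NormedAddCommGroup E] [InnerProductSpace ℝ E] [Fintype ι]
    {D : Matrix ι ι ℝ} {p : ι → E} (hp : ∀ i j, D i j = dist (p i) (p j) ^ 2) (hD : D ≠ 0)
    {z : ι → ℝ} (hz : D *ᵥ z = 0) : ∑ i, z i = 0 := by
  by_contra hs
  set y := (∑ i, z i)⁻¹ • z
  have hy : ∑ j, y j = 1 := by
    simp only [y, Pi.smul_apply, smul_eq_mul, ← Finset.mul_sum, inv_mul_cancel₀ hs]
  have hDy : ∀ i, ∑ j, y j * dist (p i) (p j) ^ 2 = 0 := fun i => by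
    have := congrFun (show D *ᵥ y = 0 by rw [mulVec_smul, hz, smul_zero]) i
    simpa only [mulVec, dotProduct, hp, mul_comm, Pi.zero_apply] using this
  apply hD
  ext i j
  rw [hp, eq_sum_smul_of_forall_sum_mul_dist_sq_eq_zero hy hDy i,
    eq_sum_smul_of_forall_sum_mul_dist_sq_eq_zero hy hDy j, dist_self, zero_pow two_ne_zero,
    zero_apply]

theorem stmt4 {n : ℕ} (D : Matrix (Fin n) (Fin n) ℝ)
    (hEDM : ∃ (m : ℕ) (p : Fin n → EuclideanSpace ℝ (Fin m)),
      ∀ i j, D i j = dist (p i) (p j) ^ 2)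
    (hD0 : D ≠ 0) :
    ∃ w : Fin n → ℝ, D *ᵥ w = fun _ => 1 := by
  obtain ⟨m, p, hp⟩ := hEDM
  have hD : D.IsHermitian := by
    ext i j
    simp only [conjTranspose_apply, hp, dist_comm, star_trivial]
  refine hD.exists_mulVec_eq_of_forall_dotProduct_eq_zero fun z hz => ?_
  simpa only [dotProduct, Pi.star_apply, star_trivial, one_mul] using
    sum_eq_zero_of_mulVec_eq_zero_of_eq_dist_sq hp hD0 hz
end

section
/- Let D be a nonzero EDM and suppose Dw = e. Then D is spherical (its generating points lie on a sphere) if and only if eᵀw > 0, in which case the radius of the sphere is ρ = (1/(2 eᵀw))^{1/2}. -/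
/-!
Write `s = ∑ wᵢ`. For any base point `c`, `x ↦ ∑ⱼ wⱼ ‖x - pⱼ‖²` is the quadratic
`s ‖x - c‖² - 2 ⟪x - c, v⟫ + A` with `v = ∑ wⱼ (pⱼ - c)` and `A = ∑ wⱼ ‖pⱼ - c‖²`, and `Dw = e`
says it equals `1` at every `pᵢ`.

If `s > 0`, take `c` the centre of mass, so that `v = 0`: then `s ‖pᵢ - c‖² + A = 1` for all `i`,
and averaging against `w` gives `2 s A = s`, i.e. `‖pᵢ - c‖² = 1 / (2 s)`.

If the `pᵢ` lie on a sphere of centre `c` and radius `ρ`, then `A = s ρ²` and `⟪pᵢ - c, v⟫ = t`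
with `t = s ρ² - 1/2`, whence `‖v‖² = s t`. Were `s ≤ 0`, then `t < 0`, and Cauchy–Schwarz
`t² ≤ ρ² ‖v‖² = s ρ² t` would force `t ≥ s ρ²`, which is absurd.
-/

open Matrix InnerProductSpace

variable {ι E : Type*} [Fintype ι] [NormedAddCommGroup E] [InnerProductSpace ℝ E]

lemma sum_mul_dist_sq_eq (p : ι → E) (w : ι → ℝ) (x c : E) :
    ∑ j, w j * dist x (p j) ^ 2 =
      (∑ j, w j) * dist x c ^ 2 - 2 * ⟪x - c, ∑ j, w j • (p j - c)⟫_ℝ +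
        ∑ j, w j * dist (p j) c ^ 2 := by
  have hterm : ∀ j, w j * dist x (p j) ^ 2 =
      w j * dist x c ^ 2 - 2 * (w j * ⟪x - c, p j - c⟫_ℝ) + w j * dist (p j) c ^ 2 := by
    intro j
    rw [dist_eq_norm, dist_eq_norm, dist_eq_norm, ← sub_sub_sub_cancel_right x (p j) c,
      norm_sub_sq_real]
    ring
  simp only [hterm, Finset.sum_add_distrib, Finset.sum_sub_distrib, ← Finset.mul_sum,
    ← Finset.sum_mul, inner_sum, real_inner_smul_right]

lemma sum_smul_sub_centerMass (p : ι → E) (w : ι → ℝ) (hw : ∑ j, w j ≠ 0) :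
    ∑ j, w j • (p j - Finset.univ.centerMass w p) = 0 := by
  simp only [smul_sub, Finset.sum_sub_distrib, ← Finset.sum_smul, Finset.centerMass,
    smul_inv_smul₀ hw, sub_self]

section

variable {p : ι → E} {w : ι → ℝ} (h : ∀ i, ∑ j, w j * dist (p i) (p j) ^ 2 = 1)
include h

lemma dist_centerMass_eq_of_sum_pos (hs : 0 < ∑ j, w j) (i : ι) :
    dist (p i) (Finset.univ.centerMass w p) = √(1 / (2 * ∑ j, w j)) := by
  have hrow : ∀ k, (∑ j, w j) * dist (p k) (Finset.univ.centerMass w p) ^ 2 +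
      ∑ j, w j * dist (p j) (Finset.univ.centerMass w p) ^ 2 = 1 := fun k => by
    rw [← h k, sum_mul_dist_sq_eq p w (p k) (Finset.univ.centerMass w p),
      sum_smul_sub_centerMass p w hs.ne', inner_zero_right, mul_zero, sub_zero]
  set c := Finset.univ.centerMass w p
  set s := ∑ j, w j
  set A := ∑ j, w j * dist (p j) c ^ 2
  -- averaging the rows against `w`
  have hA : A = 1 / 2 := by
    have := congrArg (fun f : ι → ℝ => ∑ k, w k * f k) (funext hrow)
    simp only [mul_add, Finset.sum_add_distrib, ← Finset.sum_mul, mul_one, mul_left_comm _ s,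
      ← Finset.mul_sum] at this
    nlinarith
  rw [← Real.sqrt_sq dist_nonneg]
  congr 1
  field_simp
  linarith [hrow i]

lemma sum_pos_of_forall_dist_eq [Nonempty ι] {c : E} {ρ : ℝ} (hc : ∀ i, dist (p i) c = ρ) :
    0 < ∑ j, w j := by
  have hexp := fun i => (sum_mul_dist_sq_eq p w (p i) c).symm.trans (h i)
  set s := ∑ j, w j
  set v := ∑ j, w j • (p j - c) with hv_def
  have hA : ∑ j, w j * dist (p j) c ^ 2 = s * ρ ^ 2 := by simp only [hc, ← Finset.sum_mul, s]
  have hrow : ∀ i, ⟪p i - c, v⟫_ℝ = s * ρ ^ 2 - 1 / 2 := fun i => by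
    have := hexp i
    rw [hA, hc i] at this
    linarith
  have hv : ‖v‖ ^ 2 = s * (s * ρ ^ 2 - 1 / 2) := by
    rw [← real_inner_self_eq_norm_sq]
    nth_rw 1 [hv_def]
    simp only [sum_inner, real_inner_smul_left, hrow, ← Finset.sum_mul, s]
  obtain ⟨i⟩ := ‹Nonempty ι›
  have hcs : ⟪p i - c, v⟫_ℝ ^ 2 ≤ ρ ^ 2 * ‖v‖ ^ 2 := by
    rw [← hc i, dist_eq_norm, ← mul_pow, ← sq_abs]
    gcongr
    exact abs_real_inner_le_norm _ _
  rw [hrow i, hv] at hcs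
  by_contra! hs
  nlinarith [mul_nonpos_of_nonpos_of_nonneg hs (sq_nonneg ρ)]

end

theorem stmt5 {n m : ℕ} (D : Matrix (Fin n) (Fin n) ℝ)
    (p : Fin n → EuclideanSpace ℝ (Fin m))
    (hD : ∀ i j, D i j = dist (p i) (p j) ^ 2)
    (hD0 : D ≠ 0)
    (w : Fin n → ℝ) (hw : D *ᵥ w = fun _ => 1) :
    ((∃ (c : EuclideanSpace ℝ (Fin m)) (ρ : ℝ), ∀ i, dist (p i) c = ρ) ↔
      0 < ∑ i, w i) ∧
    (0 < ∑ i, w i →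
      ∃ c : EuclideanSpace ℝ (Fin m),
        ∀ i, dist (p i) c = Real.sqrt (1 / (2 * ∑ i, w i))) := by
  have hrow : ∀ i, ∑ j, w j * dist (p i) (p j) ^ 2 = 1 := fun i => by
    simpa [mulVec, dotProduct, hD, mul_comm] using congrFun hw i
  have : Nonempty (Fin n) := by
    by_contra hn
    exact hD0 (ext fun i => (hn ⟨i⟩).elim)
  have hsphere (hs : 0 < ∑ i, w i) : ∃ c : EuclideanSpace ℝ (Fin m),
      ∀ i, dist (p i) c = Real.sqrt (1 / (2 * ∑ i, w i)) :=
    ⟨_, dist_centerMass_eq_of_sum_pos hrow hs⟩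
  refine ⟨⟨fun ⟨c, ρ, hc⟩ => sum_pos_of_forall_dist_eq hrow hc, fun hs => ?_⟩, hsphere⟩
  obtain ⟨c, hc⟩ := hsphere hs
  exact ⟨c, _, hc⟩
end

section
/- For a simple graph G on n nodes with k nontrivial connected components, the minimum dimension d(G) of an orthonormal representation of G (unit vectors p¹,...,pⁿ with ⟨pⁱ,pʲ⟩ < 0 if i,j adjacent and ⟨pⁱ,pʲ⟩ = 0 if i ≠ j non-adjacent) equals n - k. -/
/-!
If `p` is an orthonormal representation and `∑ cᵢ pᵢ = 0`, then also `∑ |cᵢ| pᵢ = 0`, because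
all off-diagonal inner products are `≤ 0`. Pairing with `pᵢ` then shows that the zero set of
`|c|` contains every isolated vertex and is closed under adjacency, so `c` is determined by its
values at one vertex of each nontrivial component: the kernel of `c ↦ ∑ cᵢ pᵢ` has dimension at
most `k`, and the `pᵢ` span a space of dimension at least `n - k`.

Conversely, the Laplacian of `G` with an extra `1` at each isolated vertex is positive
semidefinite with positive diagonal, entries `-1` on edges and `0` on non-edges, and it kills
the indicator vector of every nontrivial component. Normalising vectors with this Gram matrix
gives an orthonormal representation whose span has dimension at most `n - k`.
-/

open scoped RealInnerProductSpace
open Finset Matrix Module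

section LinearAlgebra

variable {ι E : Type*} [NormedAddCommGroup E] [InnerProductSpace ℝ E]

theorem Submodule.span_range_smul_of_ne_zero {K M : Type*} [DivisionRing K] [AddCommGroup M]
    [Module K M] (v : ι → M) {c : ι → K} (hc : ∀ i, c i ≠ 0) :
    span K (Set.range fun i => c i • v i) = span K (Set.range v) := by
  refine le_antisymm (span_le.mpr ?_) (span_le.mpr ?_) <;> rintro _ ⟨i, rfl⟩
  · exact smul_mem _ _ (subset_span ⟨i, rfl⟩)
  · rw [← inv_smul_smul₀ (hc i) (v i)]
    exact smul_mem _ _ (subset_span ⟨i, rfl⟩)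

variable [Fintype ι]

theorem finrank_span_range_add_finrank_ker_linearCombination {K M : Type*} [DivisionRing K]
    [AddCommGroup M] [Module K M] (v : ι → M) :
    finrank K (Submodule.span K (Set.range v)) +
      finrank K (LinearMap.ker (Fintype.linearCombination K v)) = Fintype.card ι := by
  rw [← Fintype.range_linearCombination, LinearMap.finrank_range_add_finrank_ker,
    finrank_fintype_fun_eq_card]

theorem inner_linearCombination (v : ι → E) (x : E) (c : ι → ℝ) :
    ⟪x, Fintype.linearCombination ℝ v c⟫ = ∑ j, c j * ⟪x, v j⟫ := by
  simp only [Fintype.linearCombination_apply, inner_sum, real_inner_smul_right]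

theorem inner_linearCombination_self (v : ι → E) (c : ι → ℝ) :
    ⟪Fintype.linearCombination ℝ v c, Fintype.linearCombination ℝ v c⟫ =
      ∑ i, ∑ j, c i * c j * ⟪v i, v j⟫ := by
  simp only [Fintype.linearCombination_apply, sum_inner, inner_sum, real_inner_smul_left,
    real_inner_smul_right]
  exact sum_congr rfl fun i _ => sum_congr rfl fun j _ => by rw [real_inner_comm]; ring

open scoped MatrixOrder in
theorem Matrix.PosSemidef.exists_gram_eq {M : Matrix ι ι ℝ} (hM : M.PosSemidef) :
    ∃ q : ι → EuclideanSpace ℝ ι, gram ℝ q = M := by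
  classical
  set B := CFC.sqrt M
  have hBB : Bᴴ * B = M := by
    rw [(CFC.sqrt_nonneg M).posSemidef.isHermitian.eq, CFC.sqrt_mul_sqrt_self M hM.nonneg]
  refine ⟨fun i => WithLp.toLp 2 fun m => B m i, ?_⟩
  ext i j
  simp [← hBB, gram_apply, PiLp.inner_apply, Matrix.mul_apply, mul_comm]

end LinearAlgebra

namespace SimpleGraph

variable {V E F : Type*} [NormedAddCommGroup E] [InnerProductSpace ℝ E]
  [NormedAddCommGroup F] [InnerProductSpace ℝ F]

structure IsOrthonormalRep (G : SimpleGraph V) (p : V → E) : Prop where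
  norm_eq_one : ∀ i, ‖p i‖ = 1
  inner_neg_of_adj : ∀ ⦃i j⦄, G.Adj i j → ⟪p i, p j⟫ < 0
  inner_eq_zero_of_not_adj : ∀ ⦃i j⦄, i ≠ j → ¬ G.Adj i j → ⟪p i, p j⟫ = 0

def nontrivialComponents (G : SimpleGraph V) : Set G.ConnectedComponent :=
  {c | ∃ u v, u ≠ v ∧ G.connectedComponentMk u = c ∧ G.connectedComponentMk v = c}

variable {G : SimpleGraph V}

theorem connectedComponentMk_mem_nontrivialComponents {v : V} :
    G.connectedComponentMk v ∈ G.nontrivialComponents ↔ ∃ w, G.Adj v w := by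
  refine ⟨fun ⟨a, b, hab, ha, hb⟩ => ?_, fun ⟨w, hvw⟩ => ?_⟩
  · obtain ⟨x, hxv, hvx⟩ : ∃ x, v ≠ x ∧ G.Reachable v x := by
      rcases eq_or_ne v a with rfl | hva
      · exact ⟨b, hab, ConnectedComponent.exact hb.symm⟩
      · exact ⟨a, hva, ConnectedComponent.exact ha.symm⟩
    obtain ⟨w⟩ := hvx
    cases w with
    | nil => exact absurd rfl hxv
    | cons h _ => exact ⟨_, h⟩
  · exact ⟨v, w, hvw.ne, rfl, ConnectedComponent.sound hvw.symm.reachable⟩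

theorem isOrthonormalRep_comp_linearIsometry_iff {p : V → E} (f : E →ₗᵢ[ℝ] F) :
    G.IsOrthonormalRep (f ∘ p) ↔ G.IsOrthonormalRep p := by
  constructor <;> rintro ⟨h1, h2, h3⟩ <;> constructor <;>
    simp_all [LinearIsometry.inner_map_map]

theorem isOrthonormalRep_normalize {q : V → E} (hq : ∀ i, q i ≠ 0)
    (hadj : ∀ ⦃i j⦄, G.Adj i j → ⟪q i, q j⟫ < 0)
    (hnadj : ∀ ⦃i j⦄, i ≠ j → ¬ G.Adj i j → ⟪q i, q j⟫ = 0) :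
    G.IsOrthonormalRep fun i => ‖q i‖⁻¹ • q i := by
  have inner_eq i j : ⟪‖q i‖⁻¹ • q i, ‖q j‖⁻¹ • q j⟫ = ‖q i‖⁻¹ * ‖q j‖⁻¹ * ⟪q i, q j⟫ := by
    rw [real_inner_smul_left, real_inner_smul_right, mul_assoc]
  refine ⟨fun i => norm_smul_inv_norm (hq i), fun i j h => ?_, fun i j hij h => ?_⟩
  · rw [inner_eq]
    exact mul_neg_of_pos_of_neg (by have := hq i; have := hq j; positivity) (hadj h)
  · rw [inner_eq, hnadj hij h, mul_zero]

namespace IsOrthonormalRep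

variable {p : V → E} (hp : G.IsOrthonormalRep p)
include hp

theorem exists_euclideanSpace [Finite V] :
    ∃ q : V → EuclideanSpace ℝ (Fin (finrank ℝ (Submodule.span ℝ (Set.range p)))),
      G.IsOrthonormalRep q := by
  set K := Submodule.span ℝ (Set.range p)
  have : FiniteDimensional ℝ K := FiniteDimensional.span_of_finite ℝ (Set.finite_range p)
  let p' : V → K := fun i => ⟨p i, Submodule.subset_span ⟨i, rfl⟩⟩
  have hp' : G.IsOrthonormalRep p' :=
    (isOrthonormalRep_comp_linearIsometry_iff K.subtypeₗᵢ).mp hp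
  exact ⟨_, (isOrthonormalRep_comp_linearIsometry_iff
    (stdOrthonormalBasis ℝ K).repr.toLinearIsometry).mpr hp'⟩

theorem inner_self (i : V) : ⟪p i, p i⟫ = 1 := by
  rw [real_inner_self_eq_norm_sq, hp.norm_eq_one, one_pow]

variable [Fintype V]

section Kernel

variable {c : V → ℝ} (hc : Fintype.linearCombination ℝ p c = 0)
include hc

theorem linearCombination_abs_eq_zero : Fintype.linearCombination ℝ p |c| = 0 := by
  have hle : ⟪Fintype.linearCombination ℝ p |c|, Fintype.linearCombination ℝ p |c|⟫ ≤
      ⟪Fintype.linearCombination ℝ p c, Fintype.linearCombination ℝ p c⟫ := by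
    simp only [inner_linearCombination_self, Pi.abs_apply]
    refine sum_le_sum fun i _ => sum_le_sum fun j _ => ?_
    rcases eq_or_ne i j with rfl | hij
    · rw [abs_mul_abs_self]
    by_cases hadj : G.Adj i j
    · have : c i * c j ≤ |c i| * |c j| := (le_abs_self _).trans (abs_mul _ _).le
      nlinarith [hp.inner_neg_of_adj hadj]
    · simp [hp.inner_eq_zero_of_not_adj hij hadj]
  rw [hc, inner_zero_left] at hle
  exact inner_self_eq_zero.mp (le_antisymm hle real_inner_self_nonneg)

theorem eq_zero_of_forall_not_adj {i : V} (hi : ∀ j, ¬ G.Adj i j) : c i = 0 := by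
  have h := inner_linearCombination p (p i) c
  rw [hc, inner_zero_right, eq_comm] at h
  rwa [sum_eq_single i (fun j _ hji => by rw [hp.inner_eq_zero_of_not_adj hji.symm (hi j),
    mul_zero]) (by simp), hp.inner_self, mul_one] at h

theorem eq_zero_of_adj (hc0 : 0 ≤ c) {i j : V} (hi : c i = 0) (hij : G.Adj i j) : c j = 0 := by
  have hterm_nonpos : ∀ k ∈ univ, c k * ⟪p i, p k⟫ ≤ 0 := by
    intro k _
    rcases eq_or_ne i k with rfl | hik
    · rw [hi, zero_mul]
    by_cases hadj : G.Adj i k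
    · exact mul_nonpos_of_nonneg_of_nonpos (hc0 k) (hp.inner_neg_of_adj hadj).le
    · rw [hp.inner_eq_zero_of_not_adj hik hadj, mul_zero]
  have hsum := inner_linearCombination p (p i) c
  rw [hc, inner_zero_right, eq_comm] at hsum
  have hterm := (sum_eq_zero_iff_of_nonpos hterm_nonpos).mp hsum j (mem_univ j)
  exact (mul_eq_zero.mp hterm).resolve_right (hp.inner_neg_of_adj hij).ne

theorem eq_zero_of_reachable (hc0 : 0 ≤ c) {i j : V} (hi : c i = 0) (hij : G.Reachable i j) :
    c j = 0 := by
  obtain ⟨w⟩ := hij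
  induction w with
  | nil => exact hi
  | cons hadj _ ih => exact ih (hp.eq_zero_of_adj hc hc0 hi hadj)

theorem eq_zero_of_forall_out_eq_zero (h : ∀ C : G.nontrivialComponents, c C.1.out = 0) :
    c = 0 := by
  funext i
  by_cases hi : ∃ j, G.Adj i j
  · have hC := connectedComponentMk_mem_nontrivialComponents.mpr hi
    have habs : |c| (G.connectedComponentMk i).out = 0 := by
      rw [Pi.abs_apply, h ⟨_, hC⟩, abs_zero]
    exact abs_eq_zero.mp <| hp.eq_zero_of_reachable (hp.linearCombination_abs_eq_zero hc)
      (abs_nonneg c) habs (ConnectedComponent.exact (Quot.out_eq _))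
  · push Not at hi
    exact hp.eq_zero_of_forall_not_adj hc hi

end Kernel

theorem finrank_ker_linearCombination_le :
    finrank ℝ (LinearMap.ker (Fintype.linearCombination ℝ p)) ≤
      Nat.card G.nontrivialComponents := by
  have := Fintype.ofFinite G.nontrivialComponents
  let φ := LinearMap.funLeft ℝ ℝ (fun C : G.nontrivialComponents => C.1.out) ∘ₗ
    (LinearMap.ker (Fintype.linearCombination ℝ p)).subtype
  have hφ : Function.Injective φ := by
    rw [← LinearMap.ker_eq_bot, LinearMap.ker_eq_bot']
    exact fun c hc => Subtype.ext (hp.eq_zero_of_forall_out_eq_zero c.2 (congrFun hc))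
  simpa [Nat.card_eq_fintype_card] using LinearMap.finrank_le_finrank_of_injective hφ

theorem card_sub_le_finrank_span :
    Fintype.card V - Nat.card G.nontrivialComponents ≤
      finrank ℝ (Submodule.span ℝ (Set.range p)) := by
  have := finrank_span_range_add_finrank_ker_linearCombination (K := ℝ) p
  have := hp.finrank_ker_linearCombination_le
  omega

end IsOrthonormalRep

section Construction

variable [Fintype V] [DecidableEq V] (G) [DecidableRel G.Adj]

def augmentedLapMatrix : Matrix V V ℝ :=
  G.lapMatrix ℝ + diagonal fun i => if G.degree i = 0 then 1 else 0

theorem posSemidef_augmentedLapMatrix : G.augmentedLapMatrix.PosSemidef :=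
  (posSemidef_lapMatrix ℝ G).add <| posSemidef_diagonal_iff.mpr fun i => by split_ifs <;> simp

theorem augmentedLapMatrix_apply_self_pos (i : V) : 0 < G.augmentedLapMatrix i i := by
  by_cases h : G.degree i = 0 <;>
    simp [augmentedLapMatrix, lapMatrix, degMatrix, h, Nat.pos_of_ne_zero]

theorem augmentedLapMatrix_apply_of_ne {i j : V} (hij : i ≠ j) :
    G.augmentedLapMatrix i j = if G.Adj i j then -1 else 0 := by
  split_ifs with h <;>
    simp [augmentedLapMatrix, lapMatrix, degMatrix, diagonal_apply_ne _ hij, adjMatrix_apply, h]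

theorem augmentedLapMatrix_mulVec_eq_zero {x : V → ℝ} (hadj : ∀ i j, G.Adj i j → x i = x j)
    (hiso : ∀ i, G.degree i = 0 → x i = 0) : G.augmentedLapMatrix *ᵥ x = 0 := by
  rw [augmentedLapMatrix, add_mulVec, (lapMatrix_mulVec_eq_zero_iff_forall_adj G).mpr hadj,
    zero_add]
  ext i
  rw [mulVec_diagonal]
  split_ifs with h <;> simp [hiso i, h]

theorem card_nontrivialComponents_le_finrank_ker {q : V → E}
    (hq : gram ℝ q = G.augmentedLapMatrix) :
    Nat.card G.nontrivialComponents ≤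
      finrank ℝ (LinearMap.ker (Fintype.linearCombination ℝ q)) := by
  have := Fintype.ofFinite G.nontrivialComponents
  let ψ := LinearMap.funLeft ℝ ℝ G.connectedComponentMk ∘ₗ
    Function.ExtendByZero.linearMap ℝ ((↑) : G.nontrivialComponents → G.ConnectedComponent)
  have hψ : Function.Injective ψ :=
    (LinearMap.funLeft_injective_of_surjective ℝ ℝ G.connectedComponentMk Quot.mk_surjective).comp
      (Function.extend_injective Subtype.val_injective (0 : G.ConnectedComponent → ℝ))
  have hrange : LinearMap.range ψ ≤ LinearMap.ker (Fintype.linearCombination ℝ q) := by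
    rintro _ ⟨f, rfl⟩
    have hN : G.augmentedLapMatrix *ᵥ ψ f = 0 := by
      refine G.augmentedLapMatrix_mulVec_eq_zero (fun i j h => ?_) (fun i hi => ?_)
      · simp [ψ, ConnectedComponent.sound h.reachable]
      · have hi' : G.connectedComponentMk i ∉ G.nontrivialComponents := by
          rw [connectedComponentMk_mem_nontrivialComponents, ← degree_pos_iff_exists_adj, hi]
          exact lt_irrefl 0
        simp only [ψ, LinearMap.comp_apply, LinearMap.funLeft_apply,
          Function.ExtendByZero.linearMap_apply]
        exact Function.extend_apply' _ _ _ fun ⟨C, hC⟩ => hi' (hC ▸ C.2)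
    rw [LinearMap.mem_ker, ← inner_self_eq_zero (𝕜 := ℝ), Fintype.linearCombination_apply,
      ← star_dotProduct_gram_mulVec, hq, hN, dotProduct_zero]
  calc Nat.card G.nontrivialComponents = finrank ℝ (LinearMap.range ψ) := by
        rw [LinearMap.finrank_range_of_inj hψ, finrank_fintype_fun_eq_card,
          Nat.card_eq_fintype_card]
    _ ≤ _ := Submodule.finrank_mono hrange

theorem exists_isOrthonormalRep_finrank_span_le :
    ∃ p : V → EuclideanSpace ℝ V, G.IsOrthonormalRep p ∧
      finrank ℝ (Submodule.span ℝ (Set.range p)) ≤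
        Fintype.card V - Nat.card G.nontrivialComponents := by
  obtain ⟨q, hq⟩ := G.posSemidef_augmentedLapMatrix.exists_gram_eq
  have hinner i j : ⟪q i, q j⟫ = G.augmentedLapMatrix i j := by rw [← hq, gram_apply]
  have hq0 i : q i ≠ 0 := fun h => (G.augmentedLapMatrix_apply_self_pos i).ne' <| by
    rw [← hinner, h, inner_zero_left]
  refine ⟨_, isOrthonormalRep_normalize hq0 (fun i j h => ?_) (fun i j hij h => ?_), ?_⟩
  · rw [hinner, G.augmentedLapMatrix_apply_of_ne h.ne, if_pos h]
    norm_num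
  · rw [hinner, G.augmentedLapMatrix_apply_of_ne hij, if_neg h]
  · rw [Submodule.span_range_smul_of_ne_zero q fun i => inv_ne_zero (norm_ne_zero_iff.mpr (hq0 i))]
    have := finrank_span_range_add_finrank_ker_linearCombination (K := ℝ) q
    have := G.card_nontrivialComponents_le_finrank_ker hq
    omega

theorem exists_isOrthonormalRep_euclideanSpace_fin :
    ∃ p : V → EuclideanSpace ℝ (Fin (Fintype.card V - Nat.card G.nontrivialComponents)),
      G.IsOrthonormalRep p := by
  obtain ⟨p, hp, hle⟩ := G.exists_isOrthonormalRep_finrank_span_le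
  -- the lower bound makes the dimension of the span exactly `card V - k`
  rw [← le_antisymm hle hp.card_sub_le_finrank_span]
  exact hp.exists_euclideanSpace

end Construction

end SimpleGraph

theorem stmt14 {n k : ℕ} (G : SimpleGraph (Fin n))
    (hk : k = Nat.card {c : G.ConnectedComponent //
      ∃ u v : Fin n, u ≠ v ∧ G.connectedComponentMk u = c ∧
        G.connectedComponentMk v = c}) :
    IsLeast {r : ℕ | ∃ p : Fin n → EuclideanSpace ℝ (Fin r),
      (∀ i, ‖p i‖ = 1) ∧
      (∀ i j, G.Adj i j → ⟪p i, p j⟫ < 0) ∧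
      (∀ i j, i ≠ j → ¬ G.Adj i j → ⟪p i, p j⟫ = 0)} (n - k) := by
  classical
  subst hk
  refine ⟨?_, fun r ⟨p, hnorm, hadj, hnadj⟩ => ?_⟩
  · obtain ⟨p, hp⟩ := Fintype.card_fin n ▸ G.exists_isOrthonormalRep_euclideanSpace_fin
    exact ⟨p, hp.norm_eq_one, fun i j => @hp.inner_neg_of_adj i j,
      fun i j => @hp.inner_eq_zero_of_not_adj i j⟩
  · have hp : G.IsOrthonormalRep p := ⟨hnorm, hadj, hnadj⟩
    have hle := hp.card_sub_le_finrank_span.trans (Submodule.finrank_le _)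
    rwa [Fintype.card_fin, finrank_euclideanSpace_fin] at hle
end

section
/- Let D be an n × n unit spherical EDM of embedding dimension r with every off-diagonal entry ≥ 2, write D = 2(E - I) + 2Δ and Dw = e. If Δ is irreducible, then r = n - 1 (D is the EDM of a simplex) and w > 0 entrywise. -/
open Matrix

/-- A nonnegative matrix is reducible if it is a `1 × 1` zero matrix or can be
symmetrically permuted into a nontrivial block upper triangular form. -/
def Matrix.IsReducible {m : Type*} [Fintype m] [DecidableEq m]
    (A : Matrix m m ℝ) : Prop :=
  (Fintype.card m = 1 ∧ A = 0) ∨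
    ∃ S : Finset m, S.Nonempty ∧ S ≠ Finset.univ ∧
      ∀ i ∉ S, ∀ j ∈ S, A i j = 0

/-!
Centred at the centre `c` of the sphere, the points become unit vectors whose Gram matrix is
`G = 1 - Δ`: positive semidefinite with nonpositive off-diagonal entries. Replacing `v` by `|v|`
can only lower the quadratic form of such a matrix, so `ker G` is closed under `|·|`; a
nonnegative vector of `ker G` is a fixed point of the irreducible nonnegative matrix `Δ`, hence
zero or strictly positive. So every nonzero vector of `ker G` has a strict sign. An affine
dependence of the points gives such a vector with zero sum, so the points are affinely
independent and `r = n - 1`. Finally `Dw = e` reads `Gw = (∑ w - 1/2) e`: for `∑ w ≠ 1/2`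
the minimum principle `Gy > 0 → y ≥ 0` gives the sign of `w`, and for `∑ w = 1/2` the vector
`w` lies in `ker G`.
-/

open Finset RealInnerProductSpace

namespace Matrix

variable {ι : Type*} [Fintype ι] [DecidableEq ι] {Δ : Matrix ι ι ℝ}

theorem pos_of_mulVec_le_of_not_isReducible (hΔ : ∀ i j, 0 ≤ Δ i j)
    (hirr : ¬ Δ.IsReducible) {u : ι → ℝ} (hu : 0 ≤ u) (hu0 : u ≠ 0) (hΔu : Δ *ᵥ u ≤ u)
    (i : ι) : 0 < u i := by
  set S := univ.filter fun j => u j ≠ 0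
  have hS : S = univ := by
    by_contra hSu
    refine hirr (Or.inr ⟨S, ?_, hSu, fun i hi j hj => ?_⟩)
    · obtain ⟨j, hj⟩ := Function.ne_iff.mp hu0
      exact ⟨j, by simpa [S] using hj⟩
    have hui : u i = 0 := by simpa [S] using hi
    have hsum : ∑ k, Δ i k * u k = 0 :=
      le_antisymm (hui ▸ hΔu i) (sum_nonneg fun k _ => mul_nonneg (hΔ i k) (hu k))
    have hterm := (sum_eq_zero_iff_of_nonneg fun k _ => mul_nonneg (hΔ i k) (hu k)).mp hsum j
      (mem_univ j)
    exact (mul_eq_zero.mp hterm).resolve_right (by simpa [S] using hj)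
  have hi : i ∈ S := hS ▸ mem_univ i
  exact (hu i).lt_of_ne' (by simpa [S] using hi)

theorem mulVec_eq_self_of_one_sub_mulVec_eq_zero {u : ι → ℝ} (hu : (1 - Δ) *ᵥ u = 0) :
    Δ *ᵥ u = u := by
  rw [sub_mulVec, one_mulVec, sub_eq_zero] at hu
  exact hu.symm

theorem mulVec_abs_eq_zero (hΔ : ∀ i j, 0 ≤ Δ i j) (hG : (1 - Δ).PosSemidef)
    {v : ι → ℝ} (hv : (1 - Δ) *ᵥ v = 0) : (1 - Δ) *ᵥ |v| = 0 := by
  have hform : |v| ⬝ᵥ (1 - Δ) *ᵥ |v| ≤ v ⬝ᵥ (1 - Δ) *ᵥ v := by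
    simp only [dotProduct, mulVec, Finset.mul_sum]
    refine sum_le_sum fun i _ => sum_le_sum fun j _ => ?_
    rcases eq_or_ne i j with rfl | hij
    · rw [Pi.abs_apply, mul_left_comm, abs_mul_abs_self, mul_left_comm]
    · simp only [Matrix.sub_apply, one_apply_ne hij, Pi.abs_apply, zero_sub]
      nlinarith [hΔ i j, abs_mul (v i) (v j), le_abs_self (v i * v j)]
  rw [← hG.dotProduct_mulVec_zero_iff, star_trivial]
  refine le_antisymm ?_ (by simpa using hG.dotProduct_mulVec_nonneg |v|)
  simpa [hv] using hform

theorem pos_or_neg_of_mulVec_eq_zero (hΔ : ∀ i j, 0 ≤ Δ i j) (hirr : ¬ Δ.IsReducible)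
    (hG : (1 - Δ).PosSemidef) {v : ι → ℝ} (hv : (1 - Δ) *ᵥ v = 0) (hv0 : v ≠ 0) :
    (∀ i, 0 < v i) ∨ ∀ i, v i < 0 := by
  have habs := mulVec_abs_eq_zero hΔ hG hv
  have habs_pos : ∀ i, 0 < |v i| := pos_of_mulVec_le_of_not_isReducible hΔ hirr
    (abs_nonneg v) (fun h => hv0 (funext fun i => abs_eq_zero.mp (congrFun h i)))
    (mulVec_eq_self_of_one_sub_mulVec_eq_zero habs).le
  by_cases hpos : |v| + v = 0
  · right
    intro i
    have hi := congrFun hpos i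
    simp only [Pi.add_apply, Pi.abs_apply, Pi.zero_apply] at hi
    linarith [habs_pos i]
  · left
    intro i
    have hpos_nonneg : 0 ≤ |v| + v := fun j => by
      simp only [Pi.add_apply, Pi.abs_apply, Pi.zero_apply]
      linarith [neg_abs_le (v j)]
    have hpos_ker : (1 - Δ) *ᵥ (|v| + v) = 0 := by rw [mulVec_add, habs, hv, add_zero]
    have hi := pos_of_mulVec_le_of_not_isReducible hΔ hirr hpos_nonneg hpos
      (mulVec_eq_self_of_one_sub_mulVec_eq_zero hpos_ker).le i
    by_contra! hvi
    simp [abs_of_nonpos hvi] at hi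

theorem nonneg_of_forall_pos_mulVec (hΔ : ∀ i j, 0 ≤ Δ i j) (hG : (1 - Δ).PosSemidef)
    {y : ι → ℝ} (hy : ∀ i, 0 < ((1 - Δ) *ᵥ y) i) : 0 ≤ y := by
  -- With `z = y⁻`, the form `z ⬝ G y = z ⬝ G y⁺ - z ⬝ G z` is `≤ 0`, as `z` and `y⁺`
  -- have disjoint supports; but it is `> 0` unless `z = 0`.
  set z : ι → ℝ := fun i => max (-y i) 0
  have hz : 0 ≤ z := fun i => le_max_right _ _
  have hyz : 0 ≤ y + z := fun i => by
    simp only [z, Pi.add_apply, Pi.zero_apply]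
    linarith [le_max_left (-y i) 0]
  have hcross : z ⬝ᵥ (1 - Δ) *ᵥ (y + z) ≤ 0 := by
    simp only [dotProduct, mulVec, Finset.mul_sum]
    refine sum_nonpos fun i _ => sum_nonpos fun j _ => ?_
    rcases eq_or_ne i j with rfl | hij
    · have hdisj : z i * (y + z) i = 0 := by
        rcases le_total 0 (y i) with h | h <;> simp [z, h]
      rw [mul_left_comm, hdisj, mul_zero]
    · simp only [Matrix.sub_apply, one_apply_ne hij, zero_sub]
      nlinarith [mul_nonneg (hz i) (hyz j), hΔ i j]
  have hzz : 0 ≤ z ⬝ᵥ (1 - Δ) *ᵥ z := by simpa using hG.dotProduct_mulVec_nonneg z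
  have hzy : z ⬝ᵥ (1 - Δ) *ᵥ y ≤ 0 := by
    rw [mulVec_add, dotProduct_add] at hcross
    linarith
  have hz0 : z = 0 := by
    by_contra hz0
    obtain ⟨i, hi⟩ := Function.ne_iff.mp hz0
    have : 0 < z ⬝ᵥ (1 - Δ) *ᵥ y :=
      sum_pos' (fun j _ => mul_nonneg (hz j) (hy j).le)
        ⟨i, mem_univ i, mul_pos ((hz i).lt_of_ne' hi) (hy i)⟩
    linarith
  intro i
  simpa [z] using congrFun hz0 i

theorem pos_of_mulVec_eq_const (hΔ : ∀ i j, 0 ≤ Δ i j) (hirr : ¬ Δ.IsReducible)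
    (hG : (1 - Δ).PosSemidef) {w : ι → ℝ} {t : ℝ} (hw : (1 - Δ) *ᵥ w = fun _ => t)
    (ht : t < ∑ i, w i) (i : ι) : 0 < w i := by
  have hfix : w i = (Δ *ᵥ w) i + t := by
    have := congrFun hw i
    rw [sub_mulVec, one_mulVec, Pi.sub_apply] at this
    linarith
  rcases lt_trichotomy t 0 with hneg | rfl | hpos
  · have hw_nonpos : 0 ≤ -w :=
      nonneg_of_forall_pos_mulVec hΔ hG (by simp [mulVec_neg, hw, hneg])
    have hΔw : (Δ *ᵥ w) i ≤ 0 :=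
      sum_nonpos fun j _ => mul_nonpos_of_nonneg_of_nonpos (hΔ i j) (by simpa using hw_nonpos j)
    have hsum : -w i ≤ ∑ j, -w j := single_le_sum (fun j _ => hw_nonpos j) (mem_univ i)
    rw [sum_neg_distrib] at hsum
    linarith
  · have hw0 : w ≠ 0 := by
      rintro rfl
      simp at ht
    rcases pos_or_neg_of_mulVec_eq_zero hΔ hirr hG hw hw0 with h | h
    · exact h i
    · exact absurd ht (not_lt.mpr (sum_nonpos fun j _ => (h j).le))
  · have hw_nonneg := nonneg_of_forall_pos_mulVec hΔ hG (y := w) (by simp [hw, hpos])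
    have hΔw : 0 ≤ (Δ *ᵥ w) i := sum_nonneg fun j _ => mul_nonneg (hΔ i j) (hw_nonneg j)
    linarith

theorem affineIndependent_of_gram_sub_eq {E : Type*} [NormedAddCommGroup E]
    [InnerProductSpace ℝ E] (hΔ : ∀ i j, 0 ≤ Δ i j) (hirr : ¬ Δ.IsReducible)
    {p : ι → E} {c : E}
    (hgram : gram ℝ (fun i => p i - c) = 1 - Δ) : AffineIndependent ℝ p := by
  rw [affineIndependent_iff_of_fintype]
  intro v hv hvp
  rw [univ.weightedVSub_eq_weightedVSubOfPoint_of_sum_eq_zero v p hv c,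
    weightedVSubOfPoint_apply] at hvp
  have hker : (1 - Δ) *ᵥ v = 0 := by
    rw [← hgram, ← (posSemidef_gram ℝ _).dotProduct_mulVec_zero_iff,
      star_dotProduct_gram_mulVec]
    simp only [vsub_eq_sub] at hvp
    rw [hvp, inner_zero_left]
  by_contra hv0
  obtain ⟨i, hi⟩ := not_forall.mp hv0
  rcases pos_or_neg_of_mulVec_eq_zero hΔ hirr (hgram ▸ posSemidef_gram ℝ _) hker
    (Function.ne_iff.mpr ⟨i, hi⟩) with h | h
  · exact (sum_pos (fun j _ => h j) ⟨i, mem_univ i⟩).ne' hv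
  · exact (sum_neg (fun j _ => h j) ⟨i, mem_univ i⟩).ne hv

end Matrix

theorem Matrix.mulVec_eq_const_of_mulVec_eq_one {ι : Type*} [Fintype ι] {D G : Matrix ι ι ℝ}
    (hD : D = (2 : ℝ) • of (fun _ _ => 1) - (2 : ℝ) • G) {w : ι → ℝ}
    (hw : D *ᵥ w = fun _ => 1) : G *ᵥ w = fun _ => ∑ j, w j - 1 / 2 := by
  funext i
  have hones : ((of fun _ _ => (1 : ℝ)) *ᵥ w) i = ∑ j, w j := by simp [mulVec, dotProduct]
  have hi := congrFun hw i
  rw [hD, sub_mulVec, smul_mulVec, smul_mulVec, Pi.sub_apply, Pi.smul_apply, Pi.smul_apply,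
    hones, smul_eq_mul, smul_eq_mul] at hi
  linarith

theorem inner_sub_sub_eq_of_dist_eq_one {E : Type*} [NormedAddCommGroup E]
    [InnerProductSpace ℝ E] {x y c : E} (hx : dist x c = 1) (hy : dist y c = 1) :
    ⟪x - c, y - c⟫ = 1 - dist x y ^ 2 / 2 := by
  rw [dist_eq_norm x y, ← sub_sub_sub_cancel_right x y c, norm_sub_sq_real, ← dist_eq_norm,
    ← dist_eq_norm, hx, hy]
  ring

theorem AffineIndependent.finrank_vectorSpan_eq_sub_one {k V P : Type*} [DivisionRing k]
    [AddCommGroup V] [Module k V] [AddTorsor V P] {n : ℕ} {p : Fin n → P}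
    (hp : AffineIndependent k p) : Module.finrank k (vectorSpan k (Set.range p)) = n - 1 := by
  cases n with
  | zero => simp
  | succ n => exact hp.finrank_vectorSpan (Fintype.card_fin _)

theorem stmt16 {n m r : ℕ} (D : Matrix (Fin n) (Fin n) ℝ)
    (p : Fin n → EuclideanSpace ℝ (Fin m))
    (hD : ∀ i j, D i j = dist (p i) (p j) ^ 2)
    (hsphere : ∃ c, ∀ i, dist (p i) c = 1)
    (hr : Module.finrank ℝ (vectorSpan ℝ (Set.range p)) = r)
    (hoff : ∀ i j : Fin n, i ≠ j → 2 ≤ D i j)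
    (Δ : Matrix (Fin n) (Fin n) ℝ)
    (hΔ : D = 2 • ((Matrix.of fun _ _ => (1 : ℝ)) - (1 : Matrix (Fin n) (Fin n) ℝ)) + 2 • Δ)
    (w : Fin n → ℝ) (hw : D *ᵥ w = fun _ => 1)
    (hirr : ¬ Δ.IsReducible) :
    r = n - 1 ∧ ∀ i, 0 < w i := by
  obtain ⟨c, hc⟩ := hsphere
  have hDG : D = (2 : ℝ) • of (fun _ _ => (1 : ℝ)) - (2 : ℝ) • (1 - Δ) := by rw [hΔ]; module
  have hentry : ∀ i j, D i j = 2 - 2 * (1 - Δ) i j := fun i j => by simp [hDG]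
  have hgram : gram ℝ (fun i => p i - c) = 1 - Δ := by
    ext i j
    rw [gram_apply, inner_sub_sub_eq_of_dist_eq_one (hc i) (hc j), ← hD, hentry]
    ring
  have hΔnn : ∀ i j, 0 ≤ Δ i j := fun i j => by
    have hij := hentry i j
    rcases eq_or_ne i j with rfl | hne
    · rw [hD, dist_self, Matrix.sub_apply, one_apply_eq] at hij
      linarith
    · rw [Matrix.sub_apply, one_apply_ne hne] at hij
      linarith [hoff i j hne]
  refine ⟨?_, pos_of_mulVec_eq_const hΔnn hirr (hgram ▸ posSemidef_gram ℝ _)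
    (mulVec_eq_const_of_mulVec_eq_one hDG hw) (by linarith)⟩
  rw [← hr, (affineIndependent_of_gram_sub_eq hΔnn hirr hgram).finrank_vectorSpan_eq_sub_one]
end

section
/- Let D be an n × n unit spherical EDM of embedding dimension r with n = r + 2. Then at least one off-diagonal entry of D is ≤ 2. Equivalently, any r + 2 points on the unit sphere in ℝ^r contain two points at distance at most √2. -/
/-!
If `r + 2` unit vectors in `ℝ^r` were pairwise more than `√2` apart, their pairwise inner products
would all be negative. But a family with pairwise negative inner products, all of which also have
negative inner product with one further vector, is linearly independent: in a relation
`∑ gᵢ vᵢ = 0`, the vector `w = ∑_{gᵢ > 0} gᵢ vᵢ` equals `-∑_{gⱼ ≤ 0} gⱼ vⱼ`, so `‖w‖² ≤ 0`, and pairing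
`w = 0` with the further vector forces all `gᵢ ≤ 0`; symmetrically all `gᵢ ≥ 0`. Hence an obtuse
family in a space of dimension `d` has at most `d + 1` members.
-/

open Finset
open scoped RealInnerProductSpace

namespace InnerProductSpace

variable {E : Type*} [NormedAddCommGroup E] [InnerProductSpace ℝ E] {ι : Type*} [Fintype ι]
  {v : ι → E}

theorem sum_filter_pos_smul_eq_zero (hv : Pairwise fun i j => ⟪v i, v j⟫ ≤ 0) {g : ι → ℝ}
    (hg : ∑ i, g i • v i = 0) : ∑ i with 0 < g i, g i • v i = 0 := by
  set w := ∑ i with 0 < g i, g i • v i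
  have hw : w = -∑ j with ¬0 < g j, g j • v j := by
    rw [eq_neg_iff_add_eq_zero, sum_filter_add_sum_filter_not, hg]
  have hww : ⟪w, w⟫ ≤ 0 := calc
    ⟪w, w⟫ = ⟪w, -∑ j with ¬0 < g j, g j • v j⟫ := by rw [← hw]
    _ = -∑ i with 0 < g i, ∑ j with ¬0 < g j, g i * g j * ⟪v i, v j⟫ := by
      rw [inner_neg_right, sum_inner]
      simp only [inner_sum, real_inner_smul_left, real_inner_smul_right, mul_assoc,
        mul_left_comm]
    _ ≤ 0 := by
      refine neg_nonpos.mpr (sum_nonneg fun i hi => sum_nonneg fun j hj => ?_)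
      rw [mem_filter] at hi hj
      have hij : i ≠ j := by rintro rfl; exact hj.2 hi.2
      exact mul_nonneg_of_nonpos_of_nonpos
        (mul_nonpos_of_nonneg_of_nonpos hi.2.le (not_lt.mp hj.2)) (hv hij)
  exact real_inner_self_nonpos.mp hww

theorem nonpos_of_sum_smul_eq_zero (hv : Pairwise fun i j => ⟪v i, v j⟫ ≤ 0) {u : E}
    (hu : ∀ i, ⟪u, v i⟫ < 0) {g : ι → ℝ} (hg : ∑ i, g i • v i = 0) (i : ι) : g i ≤ 0 := by
  by_contra! hi
  have hpos : ∑ j with 0 < g j, g j * ⟪u, v j⟫ < 0 :=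
    sum_neg (fun j hj => mul_neg_of_pos_of_neg (mem_filter.mp hj).2 (hu j)) ⟨i, by simpa⟩
  have hzero : ∑ j with 0 < g j, g j * ⟪u, v j⟫ = 0 := by
    simp only [← real_inner_smul_right, ← inner_sum, sum_filter_pos_smul_eq_zero hv hg,
      inner_zero_right]
  exact hpos.ne hzero

theorem linearIndependent_of_pairwise_inner_neg (hv : Pairwise fun i j => ⟪v i, v j⟫ ≤ 0)
    {u : E} (hu : ∀ i, ⟪u, v i⟫ < 0) : LinearIndependent ℝ v := by
  refine Fintype.linearIndependent_iff.mpr fun g hg i => le_antisymm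
    (nonpos_of_sum_smul_eq_zero hv hu hg i) (neg_nonpos.mp ?_)
  refine nonpos_of_sum_smul_eq_zero hv hu (g := -g) ?_ i
  simp only [Pi.neg_apply, neg_smul, sum_neg_distrib, hg, neg_zero]

theorem exists_ne_inner_nonneg [FiniteDimensional ℝ E] (v : ι → E)
    (hcard : Module.finrank ℝ E + 1 < Fintype.card ι) : ∃ i j, i ≠ j ∧ 0 ≤ ⟪v i, v j⟫ := by
  classical
  by_contra! hneg
  obtain ⟨o⟩ : Nonempty ι := Fintype.card_pos_iff.mp (by omega)
  have hli : LinearIndependent ℝ fun i : {i // i ≠ o} => v i :=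
    linearIndependent_of_pairwise_inner_neg
      (fun i j hij => (hneg i j (Subtype.coe_ne_coe.mpr hij)).le) (fun i => hneg o i i.2.symm)
  have hle := hli.fintype_card_le_finrank
  rw [Fintype.card_subtype_compl, Fintype.card_subtype_eq] at hle
  omega

end InnerProductSpace

theorem stmt17_general {r : ℕ} (D : Matrix (Fin (r + 2)) (Fin (r + 2)) ℝ)
    (p : Fin (r + 2) → EuclideanSpace ℝ (Fin r))
    (hD : ∀ i j, D i j = dist (p i) (p j) ^ 2)
    (hunit : ∀ i, ‖p i‖ = 1) :
    ∃ i j : Fin (r + 2), i ≠ j ∧ D i j ≤ 2 ∧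
      dist (p i) (p j) ≤ Real.sqrt 2 := by
  obtain ⟨i, j, hij, hinner⟩ := InnerProductSpace.exists_ne_inner_nonneg p (by simp)
  have hdist : dist (p i) (p j) ^ 2 ≤ 2 := by
    rw [dist_eq_norm, norm_sub_sq_real, hunit i, hunit j]
    linarith
  exact ⟨i, j, hij, hD i j ▸ hdist, (Real.le_sqrt dist_nonneg zero_le_two).mpr hdist⟩

theorem stmt17 {r : ℕ} (D : Matrix (Fin (r + 2)) (Fin (r + 2)) ℝ)
    (p : Fin (r + 2) → EuclideanSpace ℝ (Fin r))
    (hD : ∀ i j, D i j = dist (p i) (p j) ^ 2)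
    (hunit : ∀ i, ‖p i‖ = 1)
    (hr : Module.finrank ℝ (vectorSpan ℝ (Set.range p)) = r) :
    ∃ i j : Fin (r + 2), i ≠ j ∧ D i j ≤ 2 ∧
      dist (p i) (p j) ≤ Real.sqrt 2 :=
  stmt17_general D p hD hunit
end

section
/- Let D be a 2r × 2r unit spherical EDM of embedding dimension r with every off-diagonal entry ≥ 2. Then there exists a permutation matrix Q such that QDQᵀ is the r × r block matrix with diagonal blocks 4(E₂ - I₂) and all off-diagonal blocks 2E₂; i.e., the generating points are the vertices of the regular r-crosspolytope. -/
/-!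
Since `‖p i‖ = 1`, `D i j = 2 - 2 ⟪p i, p j⟫`, so the hypothesis says that the `2r` points are
pairwise at non-acute angles. Projecting such a family onto the orthogonal complement of one of
its members keeps it pairwise non-acute and loses only that member and at most one negative
multiple of it; by induction a space of dimension `d` holds at most `2d` nonzero pairwise
non-acute vectors, and when there are exactly `2d` each vector must have a negative multiple among
the others. That partner is then antipodal, and every other vector is orthogonal to both, so the
points are `±e₁, …, ±e_r` for an orthonormal basis; listing the antipodal pairs consecutively
gives the permutation.
-/

open Module
open scoped RealInnerProductSpace

section PairwiseInnerNonpos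

variable {E : Type*} [NormedAddCommGroup E] [InnerProductSpace ℝ E] {ι : Type*} {v : ι → E}

theorem injective_of_pairwise_inner_nonpos (hv0 : ∀ i, v i ≠ 0)
    (hv : Pairwise fun i j => ⟪v i, v j⟫ ≤ 0) : Function.Injective v := by
  intro i j hij
  by_contra hne
  have hle : ⟪v i, v j⟫ ≤ 0 := hv hne
  rw [hij, real_inner_self_nonpos] at hle
  exact hv0 j hle

theorem ncard_setOf_eq_neg_smul_le_one [Finite ι] (hv : Pairwise fun i j => ⟪v i, v j⟫ ≤ 0)
    {u : E} (hu : u ≠ 0) : {j | ∃ c < (0 : ℝ), v j = c • u}.ncard ≤ 1 := by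
  refine (Set.ncard_le_one_iff_subsingleton).mpr ?_
  rintro j ⟨c, hc, hj⟩ k ⟨c', hc', hk⟩
  by_contra hjk
  have hle : ⟪v j, v k⟫ ≤ 0 := hv hjk
  rw [hj, hk, real_inner_smul_left, real_inner_smul_right, real_inner_self_eq_norm_sq] at hle
  nlinarith [mul_pos_of_neg_of_neg hc hc', pow_pos (norm_pos_iff.mpr hu) 2]

/-- The projections onto `(ℝ ∙ v i₀)ᗮ` stay pairwise obtuse because the discarded coefficients
`⟪v i₀, v j⟫ / ‖v i₀‖²` (`j ≠ i₀`) are all nonpositive. -/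
theorem exists_orthogonal_reduction [Finite ι] (K : Submodule ℝ E) (hvK : ∀ i, v i ∈ K)
    (hv0 : ∀ i, v i ≠ 0) (hv : Pairwise fun i j => ⟪v i, v j⟫ ≤ 0) (i₀ : ι) :
    ∃ (T : Set ι) (w : T → E), (∀ j, w j ∈ (ℝ ∙ v i₀)ᗮ ⊓ K) ∧ (∀ j, w j ≠ 0) ∧
      (Pairwise fun j k => ⟪w j, w k⟫ ≤ 0) ∧
      Nat.card ι ≤ 1 + {j | ∃ c < (0 : ℝ), v j = c • v i₀}.ncard + T.ncard := by
  set u := v i₀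
  have hu : 0 < ‖u‖ ^ 2 := pow_pos (norm_pos_iff.mpr (hv0 i₀)) 2
  set a : ι → ℝ := fun j => ⟪u, v j⟫ / ‖u‖ ^ 2
  set y : ι → E := fun j => v j - a j • u
  have ha : ∀ j, j ≠ i₀ → a j ≤ 0 := fun j hj =>
    div_nonpos_of_nonpos_of_nonneg (hv hj.symm) hu.le
  have hu_y : ∀ j, ⟪u, y j⟫ = 0 := fun j => by
    simp only [y, a, inner_sub_right, real_inner_smul_right, real_inner_self_eq_norm_sq,
      div_mul_cancel₀ _ hu.ne', sub_self]
  have hy_inner : ∀ j k, ⟪y j, y k⟫ = ⟪v j, v k⟫ - a j * a k * ‖u‖ ^ 2 := fun j k => by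
    have hv_y : ∀ j, v j = a j • u + y j := fun j => by simp [y]
    rw [hv_y j, hv_y k]
    simp only [inner_add_left, inner_add_right, real_inner_smul_left, real_inner_smul_right,
      real_inner_self_eq_norm_sq, hu_y, real_inner_comm u (y _)]
    ring
  have hy_i₀ : y i₀ = 0 := by
    simp [y, a, u, div_self hu.ne']
  refine ⟨{j | y j ≠ 0}, fun j => y j, fun j => ⟨?_, ?_⟩, fun j => j.2, ?_, ?_⟩
  · exact Submodule.mem_orthogonal_singleton_iff_inner_right.mpr (hu_y j)
  · exact K.sub_mem (hvK j) (K.smul_mem _ (hvK i₀))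
  · intro j k hjk
    have hne : ∀ l : {j | y j ≠ 0}, (l : ι) ≠ i₀ := fun l h => l.2 (h ▸ hy_i₀)
    have hvjk : ⟪v j, v k⟫ ≤ 0 := hv (Subtype.coe_injective.ne hjk)
    rw [hy_inner]
    nlinarith [mul_nonneg_of_nonpos_of_nonpos (ha j (hne j)) (ha k (hne k))]
  · have hcover : Set.univ ⊆ {i₀} ∪ {j | ∃ c < (0 : ℝ), v j = c • u} ∪ {j | y j ≠ 0} := by
      intro j _
      by_cases hj : j = i₀
      · simp [hj]
      by_cases hyj : y j = 0
      · have hvj : v j = a j • u := sub_eq_zero.mp hyj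
        have haj : a j ≠ 0 := fun h => hv0 j (by rw [hvj, h, zero_smul])
        exact Or.inl (Or.inr ⟨a j, (ha j hj).lt_of_ne haj, hvj⟩)
      · exact Or.inr hyj
    calc Nat.card ι = (Set.univ : Set ι).ncard := (Set.ncard_univ ι).symm
      _ ≤ ({i₀} ∪ {j | ∃ c < (0 : ℝ), v j = c • u} ∪ {j | y j ≠ 0}).ncard :=
        Set.ncard_le_ncard hcover
      _ ≤ _ := by grw [Set.ncard_union_le, Set.ncard_union_le, Set.ncard_singleton]

theorem finrank_orthogonal_span_singleton_inf {K : Submodule ℝ E} [FiniteDimensional ℝ K]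
    {u : E} (huK : u ∈ K) (hu : u ≠ 0) :
    finrank ℝ ((ℝ ∙ u)ᗮ ⊓ K : Submodule ℝ E) + 1 = finrank ℝ K := by
  rw [← Submodule.finrank_add_inf_finrank_orthogonal
    ((Submodule.span_singleton_le_iff_mem u K).mpr huK), finrank_span_singleton hu, add_comm]

theorem card_le_two_mul_finrank [FiniteDimensional ℝ E] [Finite ι] (K : Submodule ℝ E)
    (hvK : ∀ i, v i ∈ K) (hv0 : ∀ i, v i ≠ 0) (hv : Pairwise fun i j => ⟪v i, v j⟫ ≤ 0) :
    Nat.card ι ≤ 2 * finrank ℝ K := by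
  induction hd : finrank ℝ K generalizing K ι with
  | zero =>
    have hK : K = ⊥ := Submodule.finrank_eq_zero.mp hd
    have : IsEmpty ι := ⟨fun i => hv0 i (by simpa [hK] using hvK i)⟩
    simp
  | succ d ih =>
    cases isEmpty_or_nonempty ι
    · simp
    obtain ⟨i₀⟩ := ‹Nonempty ι›
    obtain ⟨T, w, hwK, hw0, hw, hcard⟩ := exists_orthogonal_reduction K hvK hv0 hv i₀
    have hT : T.ncard ≤ 2 * d := by
      rw [← Nat.card_coe_set_eq]
      refine ih _ hwK hw0 hw ?_
      have := finrank_orthogonal_span_singleton_inf (hvK i₀) (hv0 i₀)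
      omega
    have := ncard_setOf_eq_neg_smul_le_one hv (hv0 i₀)
    omega

theorem exists_eq_neg_smul_of_card_eq [FiniteDimensional ℝ E] [Finite ι] (hv0 : ∀ i, v i ≠ 0)
    (hv : Pairwise fun i j => ⟪v i, v j⟫ ≤ 0) (hcard : Nat.card ι = 2 * finrank ℝ E) (i : ι) :
    ∃ j, ∃ c < (0 : ℝ), v j = c • v i := by
  obtain ⟨T, w, hwK, hw0, hw, hι⟩ := exists_orthogonal_reduction ⊤ (fun _ => trivial) hv0 hv i
  have hT := card_le_two_mul_finrank _ hwK hw0 hw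
  have hdim := finrank_orthogonal_span_singleton_inf (K := ⊤) trivial (hv0 i)
  rw [Nat.card_coe_set_eq] at hT
  rw [finrank_top] at hdim
  have : {j | ∃ c < (0 : ℝ), v j = c • v i}.ncard ≠ 0 := by omega
  exact Set.nonempty_of_ncard_ne_zero this

theorem inner_eq_zero_or_eq_neg_smul_of_card_eq [FiniteDimensional ℝ E] [Finite ι]
    (hv0 : ∀ i, v i ≠ 0) (hv : Pairwise fun i j => ⟪v i, v j⟫ ≤ 0)
    (hcard : Nat.card ι = 2 * finrank ℝ E) {i k : ι} (hik : i ≠ k) :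
    ⟪v i, v k⟫ = 0 ∨ ∃ c < (0 : ℝ), v k = c • v i := by
  obtain ⟨j, c, hc, hj⟩ := exists_eq_neg_smul_of_card_eq hv0 hv hcard i
  by_cases hkj : k = j
  · exact Or.inr ⟨c, hc, hkj ▸ hj⟩
  have hjk : ⟪v j, v k⟫ ≤ 0 := hv (Ne.symm hkj)
  rw [hj, real_inner_smul_left] at hjk
  have hik' : ⟪v i, v k⟫ ≤ 0 := hv hik
  exact Or.inl (le_antisymm hik' (nonneg_of_mul_nonpos_right hjk hc))

theorem eq_neg_of_eq_neg_smul_of_norm_eq {x y : E} {c : ℝ} (hx : x ≠ 0) (hxy : ‖y‖ = ‖x‖)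
    (hc : c < 0) (h : y = c • x) : y = -x := by
  rw [h, norm_smul, Real.norm_eq_abs, abs_of_neg hc] at hxy
  have : c = -1 := by
    have := norm_pos_iff.mpr hx
    nlinarith
  rw [h, this, neg_one_smul]

theorem exists_eq_neg_of_card_eq [FiniteDimensional ℝ E] [Finite ι] (hunit : ∀ i, ‖v i‖ = 1)
    (hv : Pairwise fun i j => ⟪v i, v j⟫ ≤ 0) (hcard : Nat.card ι = 2 * finrank ℝ E) (i : ι) :
    ∃ j, v j = -v i := by
  have hv0 : ∀ i, v i ≠ 0 := fun i => norm_ne_zero_iff.mp (by simp [hunit])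
  obtain ⟨j, c, hc, hj⟩ := exists_eq_neg_smul_of_card_eq hv0 hv hcard i
  exact ⟨j, eq_neg_of_eq_neg_smul_of_norm_eq (hv0 i) (by rw [hunit, hunit]) hc hj⟩

theorem inner_eq_zero_or_eq_neg_of_card_eq [FiniteDimensional ℝ E] [Finite ι]
    (hunit : ∀ i, ‖v i‖ = 1) (hv : Pairwise fun i j => ⟪v i, v j⟫ ≤ 0)
    (hcard : Nat.card ι = 2 * finrank ℝ E) {i k : ι} (hik : i ≠ k) :
    ⟪v i, v k⟫ = 0 ∨ v k = -v i := by
  have hv0 : ∀ i, v i ≠ 0 := fun i => norm_ne_zero_iff.mp (by simp [hunit])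
  refine (inner_eq_zero_or_eq_neg_smul_of_card_eq hv0 hv hcard hik).imp_right ?_
  rintro ⟨c, hc, hk⟩
  exact eq_neg_of_eq_neg_smul_of_norm_eq (hv0 i) (by rw [hunit, hunit]) hc hk

theorem ncard_setOf_eq_or_eq_neg_of_card_eq [FiniteDimensional ℝ E] [Finite ι]
    (hunit : ∀ i, ‖v i‖ = 1) (hv : Pairwise fun i j => ⟪v i, v j⟫ ≤ 0)
    (hcard : Nat.card ι = 2 * finrank ℝ E) (i : ι) :
    {k | v k = v i ∨ v k = -v i}.ncard = 2 := by
  have hv0 : ∀ i, v i ≠ 0 := fun i => norm_ne_zero_iff.mp (by simp [hunit])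
  have hinj := injective_of_pairwise_inner_nonpos hv0 hv
  obtain ⟨j, hj⟩ := exists_eq_neg_of_card_eq hunit hv hcard i
  have hij : i ≠ j := by
    rintro rfl
    rw [eq_neg_iff_add_eq_zero, ← two_smul ℝ, smul_eq_zero] at hj
    exact hv0 i (hj.resolve_left two_ne_zero)
  have hset : {k | v k = v i ∨ v k = -v i} = {i, j} := by
    ext k
    simp [← hj, hinj.eq_iff]
  rw [hset, Set.ncard_pair hij]

end PairwiseInnerNonpos

theorem Set.pair_neg_eq_pair_neg_iff {α : Type*} [InvolutiveNeg α] {x y : α} :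
    ({x, -x} : Set α) = {y, -y} ↔ x = y ∨ x = -y := by
  rw [Set.pair_eq_pair_iff, neg_inj, and_self, neg_eq_iff_eq_neg, and_self]

theorem exists_finEquiv_fiber_iff_div_two {α β : Type*} [Finite α] {r : ℕ} (π : α → β)
    (hα : Nat.card α = 2 * r) (hπ : ∀ a, (π ⁻¹' {π a}).ncard = 2) :
    ∃ e : Fin (2 * r) ≃ α, ∀ i j, π (e i) = π (e j) ↔ (i : ℕ) / 2 = j / 2 := by
  set π' := Set.rangeFactorization π
  have hπ' : ∀ a b, π' a = π' b ↔ π a = π b := fun a b => Subtype.ext_iff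
  have hfiber : ∀ q, Nat.card {a // π' a = q} = 2 := by
    rintro ⟨_, a, rfl⟩
    rw [← hπ a, ← Nat.card_coe_set_eq]
    exact Nat.card_congr (Equiv.subtypeEquivRight fun b => hπ' b a)
  let fibers : α ≃ Set.range π × Fin 2 :=
    (Equiv.sigmaFiberEquiv π').symm.trans <|
      (Equiv.sigmaCongrRight fun q => Finite.equivFinOfCardEq (hfiber q)).trans
        (Equiv.sigmaEquivProd _ _)
  have hrange : Nat.card (Set.range π) = r := by
    have := Nat.card_congr fibers
    rw [Nat.card_prod, Nat.card_fin, hα] at this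
    omega
  let e : α ≃ Fin (2 * r) :=
    fibers.trans <| ((Finite.equivFinOfCardEq hrange).prodCongr (Equiv.refl _)).trans <|
      finProdFinEquiv.trans (finCongr (mul_comm r 2))
  have he : ∀ a, (e a : ℕ) / 2 = Finite.equivFinOfCardEq hrange (π' a) := by
    intro a
    simp only [e, fibers, Equiv.trans_apply, Equiv.sigmaCongrRight_apply,
      Equiv.sigmaFiberEquiv_symm_apply_fst, Equiv.sigmaEquivProd_apply, Equiv.prodCongr_apply,
      Equiv.coe_refl, Prod.map_apply, id_eq, finCongr_apply, Fin.val_cast,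
      finProdFinEquiv_apply_val]
    omega
  refine ⟨e.symm, fun i j => ?_⟩
  rw [← e.apply_symm_apply i, ← e.apply_symm_apply j, he, he, Fin.val_inj,
    Equiv.apply_eq_iff_eq, hπ', e.symm_apply_apply, e.symm_apply_apply]

theorem stmt18_general {r : ℕ} (D : Matrix (Fin (2 * r)) (Fin (2 * r)) ℝ)
    (p : Fin (2 * r) → EuclideanSpace ℝ (Fin r))
    (hD : ∀ i j, D i j = dist (p i) (p j) ^ 2)
    (hunit : ∀ i, ‖p i‖ = 1)
    (hoff : ∀ i j : Fin (2 * r), i ≠ j → 2 ≤ D i j) :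
    ∃ σ : Equiv.Perm (Fin (2 * r)),
      ∀ i j : Fin (2 * r),
        D (σ i) (σ j) =
          if i = j then 0 else if (i : ℕ) / 2 = (j : ℕ) / 2 then 4 else 2 := by
  have hD_inner : ∀ i j, D i j = 2 - 2 * ⟪p i, p j⟫ := fun i j => by
    rw [hD, dist_eq_norm, norm_sub_sq_real, hunit, hunit]
    ring
  have hp : Pairwise fun i j => ⟪p i, p j⟫ ≤ 0 := fun i j hij => by
    linarith [hoff i j hij, hD_inner i j]
  have hcard : Nat.card (Fin (2 * r)) = 2 * finrank ℝ (EuclideanSpace ℝ (Fin r)) := by simp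
  have hinj := injective_of_pairwise_inner_nonpos
    (fun i => norm_ne_zero_iff.mp (by simp [hunit])) hp
  obtain ⟨σ, hσ⟩ :=
    exists_finEquiv_fiber_iff_div_two (fun i => ({p i, -p i} : Set _)) (Nat.card_fin _) fun a => by
      simpa only [Set.preimage, Set.mem_singleton_iff, Set.pair_neg_eq_pair_neg_iff] using
        ncard_setOf_eq_or_eq_neg_of_card_eq hunit hp hcard a
  simp only [Set.pair_neg_eq_pair_neg_iff] at hσ
  refine ⟨σ, fun i j => ?_⟩
  split_ifs with hij hdiv
  · rw [hij, hD, dist_self, sq, mul_zero]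
  · have hneg : p (σ i) = -p (σ j) :=
      ((hσ i j).mpr hdiv).resolve_left (hinj.ne (σ.injective.ne hij))
    rw [hD_inner, hneg, inner_neg_left, real_inner_self_eq_norm_sq, hunit]
    norm_num
  · obtain h | h := inner_eq_zero_or_eq_neg_of_card_eq hunit hp hcard (σ.injective.ne hij)
    · rw [hD_inner, h]
      norm_num
    · exact absurd ((hσ i j).mp (Or.inr (by rw [h, neg_neg]))) hdiv

theorem stmt18 {r : ℕ} (D : Matrix (Fin (2 * r)) (Fin (2 * r)) ℝ)
    (p : Fin (2 * r) → EuclideanSpace ℝ (Fin r))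
    (hD : ∀ i j, D i j = dist (p i) (p j) ^ 2)
    (hunit : ∀ i, ‖p i‖ = 1)
    (hr : Module.finrank ℝ (vectorSpan ℝ (Set.range p)) = r)
    (hoff : ∀ i j : Fin (2 * r), i ≠ j → 2 ≤ D i j) :
    ∃ σ : Equiv.Perm (Fin (2 * r)),
      ∀ i j : Fin (2 * r),
        D (σ i) (σ j) =
          if i = j then 0 else if (i : ℕ) / 2 = (j : ℕ) / 2 then 4 else 2 :=
  stmt18_general D p hD hunit hoff
end

section
/- Let D be an n × n unit spherical EDM of embedding dimension r with 2 ≤ n - r ≤ r, and suppose every off-diagonal entry of D is ≥ 2. Then there exists a permutation matrix Q such that QDQᵀ is block partitioned into n - r diagonal blocks D¹,...,D^{n-r}, each a unit spherical EDM of a simplex, with all off-diagonal blocks equal to 2E (the all-ones matrix of appropriate size). -/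
/-!
For unit vectors `D i j = 2 - 2 ⟪p i, p j⟫`, so the hypothesis `D i j ≥ 2` says that the points
form an obtuse family: their pairwise inner products are `≤ 0`. For an obtuse family the positive
part of a linear relation is again a relation. Hence the sign pattern of a relation is constant on
each component of the non-orthogonality graph, a relation supported on one component is determined
by its total weight, and the space of relations has one dimension per component on which the
points are linearly dependent. Since `n ≥ r + 2` points spanning an `r`-dimensional affine space
are affinely dependent, the positive part of an affine dependence puts `0` into their affine hull,
so the space of relations has dimension `n - r`. Sending these `n - r` singular components to
distinct blocks, and the other components anywhere, gives the partition: points in different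
blocks are orthogonal, i.e. `D i j = 2`, and each block contains at most one singular component,
which makes it affinely independent.
-/

open Finset
open scoped RealInnerProductSpace

section

variable {E : Type*} [NormedAddCommGroup E] [InnerProductSpace ℝ E] {ι : Type*} (v : ι → E)

def NonorthComponent : Type _ :=
  Quot fun i j => ⟪v i, v j⟫ ≠ 0

def component (i : ι) : NonorthComponent v :=
  Quot.mk _ i

noncomputable instance : DecidableEq (NonorthComponent v) :=
  Classical.decEq _

instance [Finite ι] : Finite (NonorthComponent v) :=
  Quot.finite _

noncomputable instance [Finite ι] : Fintype (NonorthComponent v) :=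
  Fintype.ofFinite _

def linearRelations [Fintype ι] : Submodule ℝ (ι → ℝ) :=
  LinearMap.ker (Fintype.linearCombination ℝ v)

theorem finrank_linearRelations_add_finrank_span [Fintype ι] :
    Module.finrank ℝ (linearRelations v) + Module.finrank ℝ (Submodule.span ℝ (Set.range v)) =
      Fintype.card ι := by
  rw [add_comm, ← Fintype.range_linearCombination, linearRelations,
    LinearMap.finrank_range_add_finrank_ker, Module.finrank_fintype_fun_eq_card]

variable {v}

theorem component_surjective : Function.Surjective (component v) :=
  Quot.mk_surjective

theorem inner_eq_zero_of_component_ne {i j : ι} (h : component v i ≠ component v j) :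
    ⟪v i, v j⟫ = 0 :=
  not_not.1 fun hij => h (Quot.sound hij)

variable [Fintype ι]

theorem mem_linearRelations {a : ι → ℝ} : a ∈ linearRelations v ↔ ∑ i, a i • v i = 0 := by
  rw [linearRelations, LinearMap.mem_ker, Fintype.linearCombination_apply]

theorem inner_sum_smul_sum_smul (a b : ι → ℝ) :
    ⟪∑ i, a i • v i, ∑ j, b j • v j⟫ = ∑ i, ∑ j, a i * b j * ⟪v i, v j⟫ := by
  simp_rw [sum_inner, inner_sum, real_inner_smul_left, real_inner_smul_right, mul_assoc]

theorem posPart_mem_linearRelations (hv : Pairwise fun i j => ⟪v i, v j⟫ ≤ 0) {a : ι → ℝ}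
    (ha : a ∈ linearRelations v) : (fun i => max (a i) 0) ∈ linearRelations v := by
  set pos : ι → ℝ := fun i => max (a i) 0
  set neg : ι → ℝ := fun i => max (-a i) 0
  have hsplit : ∑ i, pos i • v i = ∑ i, neg i • v i := by
    rw [← sub_eq_zero, ← sum_sub_distrib]
    simpa only [← sub_smul, pos, neg, max_zero_sub_max_neg_zero_eq_self]
      using mem_linearRelations.1 ha
  -- `pos` and `neg` have disjoint supports, so `⟪∑ pos • v, ∑ neg • v⟫` has no positive term
  have hle : ⟪∑ i, pos i • v i, ∑ i, pos i • v i⟫ ≤ 0 := by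
    nth_rw 2 [hsplit]
    rw [inner_sum_smul_sum_smul]
    refine sum_nonpos fun i _ => sum_nonpos fun j _ => ?_
    rcases eq_or_ne i j with rfl | hij
    · rcases le_total (a i) 0 with h | h <;> simp [pos, neg, h]
    · exact mul_nonpos_of_nonneg_of_nonpos (by positivity) (hv hij)
  exact mem_linearRelations.2 (real_inner_self_nonpos.1 hle)

theorem indicator_mem_linearRelations {s : Set ι} (hs : ∀ i ∈ s, ∀ j ∉ s, ⟪v i, v j⟫ = 0)
    {a : ι → ℝ} (ha : a ∈ linearRelations v) : s.indicator a ∈ linearRelations v := by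
  classical
  have horth : ⟪∑ i, s.indicator a i • v i, ∑ j, sᶜ.indicator a j • v j⟫ = 0 := by
    rw [inner_sum_smul_sum_smul]
    refine sum_eq_zero fun i _ => sum_eq_zero fun j _ => ?_
    by_cases hi : i ∈ s <;> by_cases hj : j ∈ s <;> simp [hi, hj, hs]
  have hsum : ∑ i, a i • v i = ∑ i, s.indicator a i • v i + ∑ j, sᶜ.indicator a j • v j := by
    rw [← sum_add_distrib]
    exact sum_congr rfl fun i _ => by rw [← add_smul, ← Pi.add_apply, s.indicator_self_add_compl]
  rw [mem_linearRelations.1 ha, eq_comm, ← neg_eq_iff_add_eq_zero] at hsum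
  refine mem_linearRelations.2 ((inner_self_eq_zero (𝕜 := ℝ)).1 ?_)
  rw [← neg_eq_zero, ← inner_neg_right, hsum, horth]

theorem pos_of_pos_of_inner_ne_zero (hv : Pairwise fun i j => ⟪v i, v j⟫ ≤ 0) {a : ι → ℝ}
    (ha : a ∈ linearRelations v) {i j : ι} (hi : 0 < a i) (hij : ⟪v i, v j⟫ ≠ 0) : 0 < a j := by
  by_contra! hj
  have h0 : ∑ k, max (a k) 0 * ⟪v j, v k⟫ = 0 := by
    simpa only [inner_sum, real_inner_smul_right, inner_zero_right]
      using congrArg (⟪v j, ·⟫) (mem_linearRelations.1 (posPart_mem_linearRelations hv ha))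
  have hterm : ∀ k ∈ univ, max (a k) 0 * ⟪v j, v k⟫ ≤ 0 := fun k _ => by
    rcases le_or_gt (a k) 0 with hk | hk
    · simp [hk]
    · exact mul_nonpos_of_nonneg_of_nonpos (le_max_right _ _) (hv fun h => by subst h; linarith)
  have hji := (sum_eq_zero_iff_of_nonpos hterm).1 h0 i (mem_univ i)
  rw [max_eq_left hi.le, real_inner_comm] at hji
  exact hij ((mul_eq_zero.1 hji).resolve_left hi.ne')

theorem pos_of_pos_of_component_eq (hv : Pairwise fun i j => ⟪v i, v j⟫ ≤ 0) {a : ι → ℝ}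
    (ha : a ∈ linearRelations v) {i j : ι} (hi : 0 < a i) (h : component v i = component v j) :
    0 < a j := by
  let IsPos : NonorthComponent v → Prop := Quot.lift (fun i => 0 < a i) fun i j hij =>
    propext ⟨fun hi => pos_of_pos_of_inner_ne_zero hv ha hi hij,
      fun hj => pos_of_pos_of_inner_ne_zero hv ha hj (by rwa [real_inner_comm])⟩
  exact (congrArg IsPos h).mp hi

theorem eq_zero_of_support_subset_component (hv : Pairwise fun i j => ⟪v i, v j⟫ ≤ 0)
    {a : ι → ℝ} (ha : a ∈ linearRelations v) {q : NonorthComponent v}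
    (hsupp : ∀ j, a j ≠ 0 → component v j = q) (hsum : ∑ j, a j = 0) : a = 0 := by
  have nonpos : ∀ b ∈ linearRelations v, (∀ j, b j ≠ 0 → component v j = q) →
      ∑ j, b j = 0 → ∀ j, b j ≤ 0 := by
    intro b hb hsupp hsum j
    by_contra! hj
    have hnonneg : ∀ k, 0 ≤ b k := fun k => by
      by_cases hk : b k = 0
      · exact hk.ge
      · exact (pos_of_pos_of_component_eq hv hb hj ((hsupp j hj.ne').trans (hsupp k hk).symm)).le
    have := sum_pos' (fun k _ => hnonneg k) ⟨j, mem_univ j, hj⟩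
    linarith
  funext j
  have h₁ := nonpos a ha hsupp hsum j
  have h₂ := nonpos (-a) (neg_mem ha) (by simpa using hsupp) (by simpa using hsum) j
  simp only [Pi.neg_apply, neg_nonpos] at h₂
  exact le_antisymm h₁ h₂

noncomputable def componentSum (v : ι → E) : (ι → ℝ) →ₗ[ℝ] NonorthComponent v → ℝ where
  toFun a q := ∑ j with component v j = q, a j
  map_add' a b := by ext q; simp [sum_add_distrib]
  map_smul' c a := by ext q; simp [mul_sum]

theorem sum_componentSum (a : ι → ℝ) : ∑ q, componentSum v a q = ∑ j, a j :=
  sum_fiberwise univ (component v) a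

theorem componentSum_indicator (a : ι → ℝ) (q : NonorthComponent v) :
    componentSum v ({j | component v j = q}.indicator a) = Pi.single q (componentSum v a q) := by
  ext q'
  simp only [componentSum, LinearMap.coe_mk, AddHom.coe_mk, Set.indicator_apply,
    Set.mem_ofPred_eq]
  rcases eq_or_ne q' q with rfl | hq
  · rw [Pi.single_eq_same]
    exact sum_congr rfl fun j hj => if_pos (mem_filter.1 hj).2
  · rw [Pi.single_eq_of_ne hq]
    exact sum_eq_zero fun j hj => if_neg ((mem_filter.1 hj).2.trans_ne hq)

theorem indicator_component_mem_linearRelations {a : ι → ℝ} (ha : a ∈ linearRelations v)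
    (q : NonorthComponent v) : {j | component v j = q}.indicator a ∈ linearRelations v :=
  indicator_mem_linearRelations (fun _ hi _ hj => inner_eq_zero_of_component_ne fun h =>
    hj (h.symm.trans hi)) ha

theorem eq_zero_of_componentSum_eq_zero (hv : Pairwise fun i j => ⟪v i, v j⟫ ≤ 0)
    {a : ι → ℝ} (ha : a ∈ linearRelations v) (h : componentSum v a = 0) : a = 0 := by
  funext j
  set q := component v j
  have hrestrict : {k | component v k = q}.indicator a = 0 := by
    refine eq_zero_of_support_subset_component hv (indicator_component_mem_linearRelations ha q)
      (fun k hk => not_not.1 fun hkq => hk (Set.indicator_of_notMem (s := {k | _ = q}) hkq a)) ?_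
    rw [← sum_componentSum (v := v), componentSum_indicator, Fintype.sum_pi_single', h,
      Pi.zero_apply]
  simpa [q] using congrFun hrestrict j

-- For an obtuse family these are exactly the components on which the vectors are linearly
-- dependent.
abbrev SingularComponent (v : ι → E) : Type _ :=
  {q : NonorthComponent v // ∃ a ∈ linearRelations v, componentSum v a q ≠ 0}

noncomputable instance : Fintype (SingularComponent v) := by
  classical exact Subtype.fintype _

theorem finrank_linearRelations (hv : Pairwise fun i j => ⟪v i, v j⟫ ≤ 0) :
    Module.finrank ℝ (linearRelations v) = Fintype.card (SingularComponent v) := by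
  let Φ : linearRelations v →ₗ[ℝ] SingularComponent v → ℝ :=
    LinearMap.funLeft ℝ ℝ Subtype.val ∘ₗ componentSum v ∘ₗ (linearRelations v).subtype
  have hinj : Function.Injective Φ := by
    rw [← LinearMap.ker_eq_bot, LinearMap.ker_eq_bot']
    rintro ⟨a, ha⟩ h
    refine Subtype.ext (eq_zero_of_componentSum_eq_zero hv ha (funext fun q => ?_))
    by_cases hq : ∃ b ∈ linearRelations v, componentSum v b q ≠ 0
    · exact congrFun h ⟨q, hq⟩
    · exact not_not.1 fun hne => hq ⟨a, ha, hne⟩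
  have hsurj : Function.Surjective Φ := by
    rw [← LinearMap.range_eq_top, eq_top_iff, ← (Pi.basisFun ℝ _).span_eq, Submodule.span_le]
    rintro _ ⟨⟨q, a, ha, hq⟩, rfl⟩
    refine ⟨⟨(componentSum v a q)⁻¹ • {j | component v j = q}.indicator a,
      Submodule.smul_mem _ _ (indicator_component_mem_linearRelations ha q)⟩, ?_⟩
    ext q'
    simp [Φ, componentSum_indicator, LinearMap.funLeft_apply, Pi.single_apply, hq,
      Subtype.ext_iff]
  rw [(LinearEquiv.ofBijective Φ ⟨hinj, hsurj⟩).finrank_eq, Module.finrank_fintype_fun_eq_card]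

theorem affineIndependent_subtype_of_linearRelations {P : ι → Prop}
    (h : ∀ a ∈ linearRelations v, (∀ j, ¬P j → a j = 0) → ∑ j, a j = 0 → a = 0) :
    AffineIndependent ℝ fun i : {i // P i} => v i := by
  classical
  rw [affineIndependent_iff_of_fintype]
  intro w hw₀ hw i
  rw [univ.weightedVSub_eq_linear_combination hw₀] at hw
  let a : ι → ℝ := fun j => if hj : P j then w ⟨j, hj⟩ else 0
  have hext : ∀ x : {i // P i}, a x = w x := fun x => dif_pos x.2
  have hzero : ∀ x : {i // ¬P i}, a x = 0 := fun x => dif_neg x.2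
  have ha : a = 0 := by
    refine h a (mem_linearRelations.2 ?_) (fun j hj => dif_neg hj) ?_
    · rw [← Fintype.sum_subtype_add_sum_subtype P]
      simpa only [hext, hzero, zero_smul, sum_const_zero, add_zero] using hw
    · rw [← Fintype.sum_subtype_add_sum_subtype P]
      simpa only [hext, hzero, sum_const_zero, add_zero] using hw₀
  exact (hext i).symm.trans (congrFun ha i)

theorem affineIndependent_fiber (hv : Pairwise fun i j => ⟪v i, v j⟫ ≤ 0) {β : Type*}
    (g : NonorthComponent v → β) (hg : Function.Injective fun q : SingularComponent v => g q)
    (l : β) : AffineIndependent ℝ fun i : {i // g (component v i) = l} => v i := by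
  refine affineIndependent_subtype_of_linearRelations fun a ha hsupp hsum =>
    eq_zero_of_componentSum_eq_zero hv ha (funext fun q => not_not.1 fun hq => hq ?_)
  -- a component with nonzero weight is singular and lies in the fiber; there is only one such
  have hfiber : ∀ q, componentSum v a q ≠ 0 → g q = l := by
    intro q hq
    obtain ⟨j, hj, hja⟩ := exists_ne_zero_of_sum_ne_zero hq
    exact (mem_filter.1 hj).2 ▸ not_not.1 fun hjl => hja (hsupp j hjl)
  calc componentSum v a q = ∑ q', componentSum v a q' := by
        refine (sum_eq_single q (fun q' _ hq' => not_not.1 fun hq'a => hq' ?_) (by simp)).symm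
        exact congrArg Subtype.val (@hg ⟨q', a, ha, hq'a⟩ ⟨q, a, ha, hq⟩
          ((hfiber q' hq'a).trans (hfiber q hq).symm))
    _ = 0 := by rw [sum_componentSum, hsum]

theorem zero_mem_affineSpan_of_nonneg_mem_linearRelations {b : ι → ℝ}
    (hb : b ∈ linearRelations v) (hb₀ : 0 ≤ b) (hne : b ≠ 0) :
    (0 : E) ∈ affineSpan ℝ (Set.range v) := by
  obtain ⟨i, hi⟩ := Function.ne_iff.1 hne
  have hpos : 0 < ∑ j, b j :=
    sum_pos' (fun j _ => hb₀ j) ⟨i, mem_univ i, lt_of_le_of_ne (hb₀ i) (Ne.symm hi)⟩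
  set w := (∑ j, b j)⁻¹ • b
  have hw : ∑ j, w j = 1 := by simp [w, ← mul_sum, hpos.ne']
  have hmem := affineCombination_mem_affineSpan hw v
  rwa [affineCombination_eq_linear_combination _ _ _ hw,
    show ∑ j, w j • v j = 0 by simp [w, mul_smul, ← smul_sum, mem_linearRelations.1 hb]] at hmem

theorem span_eq_vectorSpan_of_not_affineIndependent (hv : Pairwise fun i j => ⟪v i, v j⟫ ≤ 0)
    (hdep : ¬AffineIndependent ℝ v) :
    Submodule.span ℝ (Set.range v) = vectorSpan ℝ (Set.range v) := by
  simp only [affineIndependent_iff_of_fintype, not_forall] at hdep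
  obtain ⟨w, hw₀, hw, i, hi⟩ := hdep
  rw [univ.weightedVSub_eq_linear_combination hw₀] at hw
  have hpos_ne : (fun j => max (w j) 0) ≠ 0 := by
    intro h
    have hnonpos : ∀ j ∈ univ, w j ≤ 0 := fun j _ => by simpa using congrFun h j
    exact hi ((sum_eq_zero_iff_of_nonpos hnonpos).1 hw₀ i (mem_univ i))
  have h0 := zero_mem_affineSpan_of_nonneg_mem_linearRelations
    (posPart_mem_linearRelations hv (mem_linearRelations.2 hw)) (fun _ => le_max_right _ _)
    hpos_ne
  rw [← vectorSpan_insert_eq_vectorSpan h0,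
    vectorSpan_eq_span_vsub_set_right ℝ (Set.mem_insert 0 _)]
  simp only [vsub_eq_sub, sub_zero, Set.image_id', Submodule.span_insert_zero]

theorem exists_orthogonal_partition_affineIndependent (hv : Pairwise fun i j => ⟪v i, v j⟫ ≤ 0)
    {k : ℕ} (hk : Module.finrank ℝ (linearRelations v) = k) (hk₀ : 0 < k) :
    ∃ f : ι → Fin k, Function.Surjective f ∧ (∀ i j, f i ≠ f j → ⟪v i, v j⟫ = 0) ∧
      ∀ l, AffineIndependent ℝ fun i : {i // f i = l} => v i := by
  classical
  let e : SingularComponent v ≃ Fin k :=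
    Fintype.equivFinOfCardEq ((finrank_linearRelations hv).symm.trans hk)
  let g : NonorthComponent v → Fin k := fun q => if hq : _ then e ⟨q, hq⟩ else ⟨0, hk₀⟩
  have hg : ∀ q : SingularComponent v, g q = e q := fun q => dif_pos q.2
  refine ⟨g ∘ component v, fun l => ?_, fun i j hij => ?_, affineIndependent_fiber hv g ?_⟩
  · obtain ⟨i, hi⟩ := component_surjective (e.symm l).1
    exact ⟨i, by simp [hi, hg]⟩
  · exact inner_eq_zero_of_component_ne fun h => hij (congrArg g h)
  · simpa only [hg] using e.injective

end

theorem stmt19_general {n r : ℕ} (h1 : 2 ≤ n - r)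
    (D : Matrix (Fin n) (Fin n) ℝ)
    (p : Fin n → EuclideanSpace ℝ (Fin r))
    (hD : ∀ i j, D i j = dist (p i) (p j) ^ 2)
    (hunit : ∀ i, ‖p i‖ = 1)
    (hr : Module.finrank ℝ (vectorSpan ℝ (Set.range p)) = r)
    (hoff : ∀ i j : Fin n, i ≠ j → 2 ≤ D i j) :
    ∃ f : Fin n → Fin (n - r),
      Function.Surjective f ∧
      (∀ i j : Fin n, f i ≠ f j → D i j = 2) ∧
      ∀ l : Fin (n - r),
        AffineIndependent ℝ (fun i : {i : Fin n // f i = l} => p (i : Fin n)) := by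
  have hD' : ∀ i j, D i j = 2 - 2 * ⟪p i, p j⟫ := fun i j => by
    rw [hD, dist_eq_norm, norm_sub_sq_real, hunit, hunit]
    ring
  have hobtuse : Pairwise fun i j => ⟪p i, p j⟫ ≤ 0 := fun i j hij => by
    linarith [hoff i j hij, hD' i j]
  have hdep : ¬AffineIndependent ℝ p := fun h => by
    have := h.card_le_finrank_succ
    rw [Fintype.card_fin, hr] at this
    omega
  have hK : Module.finrank ℝ (linearRelations p) = n - r := by
    have := finrank_linearRelations_add_finrank_span p
    rw [span_eq_vectorSpan_of_not_affineIndependent hobtuse hdep, hr, Fintype.card_fin] at this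
    omega
  obtain ⟨f, hsurj, horth, hind⟩ :=
    exists_orthogonal_partition_affineIndependent hobtuse hK (by omega)
  exact ⟨f, hsurj, fun i j hij => by rw [hD', horth i j hij]; ring, hind⟩

theorem stmt19 {n r : ℕ} (h1 : 2 ≤ n - r) (h2 : n - r ≤ r)
    (D : Matrix (Fin n) (Fin n) ℝ)
    (p : Fin n → EuclideanSpace ℝ (Fin r))
    (hD : ∀ i j, D i j = dist (p i) (p j) ^ 2)
    (hunit : ∀ i, ‖p i‖ = 1)
    (hr : Module.finrank ℝ (vectorSpan ℝ (Set.range p)) = r)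
    (hoff : ∀ i j : Fin n, i ≠ j → 2 ≤ D i j) :
    ∃ f : Fin n → Fin (n - r),
      Function.Surjective f ∧
      (∀ i j : Fin n, f i ≠ f j → D i j = 2) ∧
      ∀ l : Fin (n - r),
        AffineIndependent ℝ (fun i : {i : Fin n // f i = l} => p (i : Fin n)) :=
  stmt19_general h1 D p hD hunit hr hoff
end
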